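/- arXiv:2506.06882 — 7 statements merged into one kernel-verified Lean document; each statement's English description precedes it below -/
import Mathlib

section
/- Let A : H₁ → H₂ be a Hilbert–Schmidt operator, and let W_n : ℝⁿ → H₁ and Z_m : ℝᵐ → H₂ be quasi-matrices (linear maps) with orthonormal columns. Given any matrix B ∈ ℝ^{m×n}, define Â := Z_m B W_n* and the compression A_{m,n} := Z_m* A W_n ∈ ℝ^{m×n}. Then ‖A − Â‖²_HS = ‖A − Z_m A_{m,n} W_n*‖²_HS + ‖A_{m,n} − B‖²_F, where ‖·‖_F is the Frobenius norm. -/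
open scoped RealInnerProductSpace

theorem hs_key
    {H₁ H₂ : Type*}
    [NormedAddCommGroup H₁] [InnerProductSpace ℝ H₁] [CompleteSpace H₁]
    [NormedAddCommGroup H₂] [InnerProductSpace ℝ H₂] [CompleteSpace H₂]
    (A : H₁ →L[ℝ] H₂)
    (e : HilbertBasis ℕ ℝ H₁)
    {m n : ℕ}
    (W : EuclideanSpace ℝ (Fin n) →ₗᵢ[ℝ] H₁)
    (Z : EuclideanSpace ℝ (Fin m) →ₗᵢ[ℝ] H₂)
    (M : Matrix (Fin m) (Fin n) ℝ)
    (hHS : Summable fun i => ‖A (e i)‖ ^ 2) :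
    ∑' i, ‖A (e i) - ∑ k : Fin m, (∑ j : Fin n,
        M k j * ⟪W (EuclideanSpace.single j 1), e i⟫) • Z (EuclideanSpace.single k 1)‖ ^ 2
    = (∑' i, ‖A (e i)‖ ^ 2)
      - 2 * ∑ k : Fin m, ∑ j : Fin n,
          M k j * ⟪Z (EuclideanSpace.single k 1), A (W (EuclideanSpace.single j 1))⟫
      + ∑ k : Fin m, ∑ j : Fin n, (M k j) ^ 2 := by
  classical
  set w : Fin n → H₁ := fun j => W (EuclideanSpace.single j 1) with hw
  set z : Fin m → H₂ := fun k => Z (EuclideanSpace.single k 1) with hz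
  set y : Fin m → H₁ := fun k => (ContinuousLinearMap.adjoint A) (z k) with hy
  have hzo : Orthonormal ℝ z := by
    rw [orthonormal_iff_ite]
    intro k l
    simp [hz, Z.inner_map_map, EuclideanSpace.inner_single_left,
      EuclideanSpace.single_apply, eq_comm]
  have hwo : Orthonormal ℝ w := by
    rw [orthonormal_iff_ite]
    intro k l
    simp [hw, W.inner_map_map, EuclideanSpace.inner_single_left,
      EuclideanSpace.single_apply, eq_comm]
  have hyw : ∀ k j, ⟪w j, y k⟫ = ⟪z k, A (w j)⟫ := by
    intro k j
    rw [show (⟪w j, y k⟫ : ℝ) = ⟪A (w j), z k⟫ from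
      ContinuousLinearMap.adjoint_inner_right A (w j) (z k), real_inner_comm]
  -- pointwise identity
  have hpt : ∀ i, ‖A (e i) - ∑ k : Fin m, (∑ j : Fin n, M k j * ⟪w j, e i⟫) • z k‖ ^ 2
      = ‖A (e i)‖ ^ 2
        - ∑ k : Fin m, ∑ j : Fin n, (2 * M k j) * (⟪w j, e i⟫ * ⟪e i, y k⟫)
        + ∑ k : Fin m, ∑ j : Fin n, ∑ j' : Fin n,
            (M k j * M k j') * (⟪w j, e i⟫ * ⟪e i, w j'⟫) := by
    intro i
    rw [norm_sub_sq_real]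
    have h1 : ⟪A (e i), ∑ k : Fin m, (∑ j : Fin n, M k j * ⟪w j, e i⟫) • z k⟫
        = ∑ k : Fin m, (∑ j : Fin n, M k j * ⟪w j, e i⟫) * ⟪e i, y k⟫ := by
      rw [inner_sum]
      refine Finset.sum_congr rfl fun k _ => ?_
      rw [real_inner_smul_right]
      congr 1
      exact (ContinuousLinearMap.adjoint_inner_right A (e i) (z k)).symm
    have h2 : ‖∑ k : Fin m, (∑ j : Fin n, M k j * ⟪w j, e i⟫) • z k‖ ^ 2
        = ∑ k : Fin m, (∑ j : Fin n, M k j * ⟪w j, e i⟫) ^ 2 := by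
      rw [← real_inner_self_eq_norm_sq, hzo.inner_sum]
      simp [sq]
    rw [h1, h2]
    congr 1
    · congr 1
      rw [Finset.mul_sum]
      refine Finset.sum_congr rfl fun k _ => ?_
      rw [Finset.sum_mul, Finset.mul_sum]
      exact Finset.sum_congr rfl fun j _ => by ring
    · refine Finset.sum_congr rfl fun k _ => ?_
      rw [sq, Finset.sum_mul_sum]
      refine Finset.sum_congr rfl fun j _ => Finset.sum_congr rfl fun j' _ => ?_
      rw [real_inner_comm (e i) (w j')]
      ring
  -- summability facts
  have hs1 : ∀ (k : Fin m) (j : Fin n),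
      Summable fun i => (2 * M k j) * (⟪w j, e i⟫ * ⟪e i, y k⟫) :=
    fun k j => (e.summable_inner_mul_inner (w j) (y k)).mul_left _
  have hs2 : ∀ (k : Fin m) (j j' : Fin n),
      Summable fun i => (M k j * M k j') * (⟪w j, e i⟫ * ⟪e i, w j'⟫) :=
    fun k j j' => (e.summable_inner_mul_inner (w j) (w j')).mul_left _
  have hS1 : Summable fun i => ∑ k : Fin m, ∑ j : Fin n,
      (2 * M k j) * (⟪w j, e i⟫ * ⟪e i, y k⟫) :=
    summable_sum fun k _ => summable_sum fun j _ => hs1 k j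
  have hS2 : Summable fun i => ∑ k : Fin m, ∑ j : Fin n, ∑ j' : Fin n,
      (M k j * M k j') * (⟪w j, e i⟫ * ⟪e i, w j'⟫) :=
    summable_sum fun k _ => summable_sum fun j _ => summable_sum fun j' _ => hs2 k j j'
  calc ∑' i, ‖A (e i) - ∑ k : Fin m, (∑ j : Fin n, M k j * ⟪w j, e i⟫) • z k‖ ^ 2
      = ∑' i, (‖A (e i)‖ ^ 2
        - ∑ k : Fin m, ∑ j : Fin n, (2 * M k j) * (⟪w j, e i⟫ * ⟪e i, y k⟫)
        + ∑ k : Fin m, ∑ j : Fin n, ∑ j' : Fin n,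
            (M k j * M k j') * (⟪w j, e i⟫ * ⟪e i, w j'⟫)) := tsum_congr hpt
    _ = (∑' i, ‖A (e i)‖ ^ 2)
        - (∑' i, ∑ k : Fin m, ∑ j : Fin n, (2 * M k j) * (⟪w j, e i⟫ * ⟪e i, y k⟫))
        + ∑' i, ∑ k : Fin m, ∑ j : Fin n, ∑ j' : Fin n,
            (M k j * M k j') * (⟪w j, e i⟫ * ⟪e i, w j'⟫) := by
          rw [Summable.tsum_add (hHS.sub hS1) hS2, Summable.tsum_sub hHS hS1]
    _ = (∑' i, ‖A (e i)‖ ^ 2)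
        - 2 * ∑ k : Fin m, ∑ j : Fin n, M k j * ⟪z k, A (w j)⟫
        + ∑ k : Fin m, ∑ j : Fin n, (M k j) ^ 2 := by
          congr 1
          · congr 1
            rw [Summable.tsum_finsetSum fun k _ => summable_sum fun j _ => hs1 k j]
            rw [Finset.mul_sum]
            refine Finset.sum_congr rfl fun k _ => ?_
            rw [Summable.tsum_finsetSum fun j _ => hs1 k j, Finset.mul_sum]
            refine Finset.sum_congr rfl fun j _ => ?_
            rw [tsum_mul_left, e.tsum_inner_mul_inner, hyw]
            ring
          · rw [Summable.tsum_finsetSum fun k _ => summable_sum fun j _ => summable_sum fun j' _ => hs2 k j j']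
            refine Finset.sum_congr rfl fun k _ => ?_
            rw [Summable.tsum_finsetSum fun j _ => summable_sum fun j' _ => hs2 k j j']
            refine Finset.sum_congr rfl fun j _ => ?_
            rw [Summable.tsum_finsetSum fun j' _ => hs2 k j j']
            have : ∀ j' : Fin n, (∑' i, (M k j * M k j') * (⟪w j, e i⟫ * ⟪e i, w j'⟫))
                = (M k j * M k j') * (if j = j' then (1:ℝ) else 0) := by
              intro j'
              rw [tsum_mul_left, e.tsum_inner_mul_inner,
                orthonormal_iff_ite.mp hwo]
            simp [this, sq, Finset.sum_ite_eq]

/-- Let `A : H₁ → H₂` be Hilbert–Schmidt, `W : ℝⁿ → H₁` and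
`Z : ℝᵐ → H₂` quasi-matrices with orthonormal columns (linear isometries), and
`B ∈ ℝ^{m×n}`. With the compression matrix `A_{m,n} = Z* A W` (entries
`⟨zₖ, A wⱼ⟩`), the approximation `Â = Z B W*` satisfies
`‖A − Â‖²_HS = ‖A − Z A_{m,n} W*‖²_HS + ‖A_{m,n} − B‖²_F`. -/
theorem hs_error_decoupling
    {H₁ H₂ : Type*}
    [NormedAddCommGroup H₁] [InnerProductSpace ℝ H₁] [CompleteSpace H₁]
    [NormedAddCommGroup H₂] [InnerProductSpace ℝ H₂] [CompleteSpace H₂]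
    (A : H₁ →L[ℝ] H₂)
    (e : HilbertBasis ℕ ℝ H₁)
    {m n : ℕ}
    (W : EuclideanSpace ℝ (Fin n) →ₗᵢ[ℝ] H₁)
    (Z : EuclideanSpace ℝ (Fin m) →ₗᵢ[ℝ] H₂)
    (B : Matrix (Fin m) (Fin n) ℝ)
    (hHS : Summable fun i => ‖A (e i)‖ ^ 2) :
    ∑' i, ‖A (e i) - ∑ k : Fin m, (∑ j : Fin n,
        B k j * ⟪W (EuclideanSpace.single j 1), e i⟫) • Z (EuclideanSpace.single k 1)‖ ^ 2
    = (∑' i, ‖A (e i) - ∑ k : Fin m, (∑ j : Fin n,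
        ⟪Z (EuclideanSpace.single k 1), A (W (EuclideanSpace.single j 1))⟫
          * ⟪W (EuclideanSpace.single j 1), e i⟫) • Z (EuclideanSpace.single k 1)‖ ^ 2)
      + ∑ k : Fin m, ∑ j : Fin n,
          (⟪Z (EuclideanSpace.single k 1), A (W (EuclideanSpace.single j 1))⟫ - B k j) ^ 2 := by
  have h1 := hs_key A e W Z B hHS
  have h2 := hs_key A e W Z
    (Matrix.of fun k j =>
      ⟪Z (EuclideanSpace.single k 1), A (W (EuclideanSpace.single j 1))⟫) hHS
  simp only [Matrix.of_apply] at h2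
  rw [h1, h2]
  have expand : (∑ k : Fin m, ∑ j : Fin n,
        (⟪Z (EuclideanSpace.single k 1), A (W (EuclideanSpace.single j 1))⟫ - B k j) ^ 2)
      = (∑ k : Fin m, ∑ j : Fin n,
          (⟪Z (EuclideanSpace.single k 1), A (W (EuclideanSpace.single j 1))⟫ : ℝ)
            * ⟪Z (EuclideanSpace.single k 1), A (W (EuclideanSpace.single j 1))⟫)
        - 2 * (∑ k : Fin m, ∑ j : Fin n,
            B k j * ⟪Z (EuclideanSpace.single k 1), A (W (EuclideanSpace.single j 1))⟫)
        + ∑ k : Fin m, ∑ j : Fin n, (B k j) ^ 2 := by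
    rw [Finset.mul_sum, ← Finset.sum_sub_distrib, ← Finset.sum_add_distrib]
    refine Finset.sum_congr rfl fun k _ => ?_
    rw [Finset.mul_sum, ← Finset.sum_sub_distrib, ← Finset.sum_add_distrib]
    exact Finset.sum_congr rfl fun j _ => by ring
  rw [expand]
  have hsq : (∑ k : Fin m, ∑ j : Fin n,
        (⟪Z (EuclideanSpace.single k 1), A (W (EuclideanSpace.single j 1))⟫ : ℝ) ^ 2)
      = ∑ k : Fin m, ∑ j : Fin n,
          (⟪Z (EuclideanSpace.single k 1), A (W (EuclideanSpace.single j 1))⟫ : ℝ)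
            * ⟪Z (EuclideanSpace.single k 1), A (W (EuclideanSpace.single j 1))⟫ :=
    Finset.sum_congr rfl fun k _ => Finset.sum_congr rfl fun j _ => sq _
  rw [hsq]
  ring
end

section
/- Let A : H₁ → H₂ be a Hilbert–Schmidt operator with left singular vectors {uᵢ} and singular values {σᵢ}, let U_k be the quasi-matrix of the first k left singular vectors and V_k that of the first k right singular vectors. Let Y : ℝ^{k+p} → H₂ be a quasi-matrix whose j-th column is y_j = ∑ᵢ ω_{ij} σᵢ uᵢ with real coefficients ω_{ij} such that ∑ᵢ ω_{ij}² σᵢ² < ∞, and let Ω_k = [ω_{ij}]_{i≤k, j≤k+p} have full row rank k. Let Q Q* be the orthogonal projection onto range(Y). Then ‖A − Q Q* A‖²_HS ≤ ∑_{i>k} σᵢ² + ‖(Id − U_k U_k*) Y Ω_k†‖²_HS, where Ω_k† is the Moore–Penrose pseudoinverse of Ω_k. -/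
/-!
Put `Z = Y Ωₖ†`, with columns `z l`. Since `Ωₖ Ωₖ† = I`, the first `k` coordinates of `z l` in the
basis `u` are `σ_l e_l`. The columns of `Z V_kᵀ` lie in `range Y`, which `P` fixes, so
`‖(Id - P) A‖_HS = ‖(Id - P)(A - Z V_kᵀ)‖_HS ≤ ‖A - Z V_kᵀ‖_HS`. Read row by row in the basis `u`,
`A - Z V_kᵀ` has vanishing rows `m < k`, and for `m ≥ k` its row `σ_m v_m - ∑_i ⟪u_m, z_i⟫ v_i` has
squared norm `σ_m² + ∑_i ⟪u_m, z_i⟫²`. Summing over `m ≥ k` gives exactly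
`∑_{m ≥ k} σ_m² + ‖(Id - U_k U_kᵀ) Z‖²_HS`.
-/

open scoped RealInnerProductSpace Matrix

theorem ENNReal.ofReal_eq_tsum_of_hasSum {ι : Type*} {f : ι → ℝ} {a : ℝ} (hf : ∀ i, 0 ≤ f i)
    (h : HasSum f a) : ENNReal.ofReal a = ∑' i, ENNReal.ofReal (f i) := by
  rw [← h.tsum_eq, ENNReal.ofReal_tsum_of_nonneg hf h.summable]

section OrthonormalExpansion

variable {ι E : Type*} [NormedAddCommGroup E] [InnerProductSpace ℝ E] {u : ι → E}
  {f : ι → ℝ} {x : E}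

theorem Orthonormal.inner_eq_of_hasSum (hu : Orthonormal ℝ u)
    (h : HasSum (fun m => f m • u m) x) (i : ι) : ⟪u i, x⟫ = f i := by
  classical
  have h' := h.mapL (innerSL ℝ (u i))
  simp only [innerSL_apply_apply, real_inner_smul_right, orthonormal_iff_ite.mp hu, mul_ite,
    mul_one, mul_zero] at h'
  simpa using h'.unique (hasSum_single i fun b hb => if_neg (Ne.symm hb))

theorem Orthonormal.hasSum_inner_smul_of_hasSum (hu : Orthonormal ℝ u)
    (h : HasSum (fun m => f m • u m) x) : HasSum (fun m => ⟪u m, x⟫ • u m) x := by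
  simpa only [hu.inner_eq_of_hasSum h] using h

theorem Orthonormal.hasSum_sq_of_hasSum (hu : Orthonormal ℝ u)
    (h : HasSum (fun m => f m • u m) x) : HasSum (fun m => f m ^ 2) (‖x‖ ^ 2) := by
  have h' := h.mapL (innerSL ℝ x)
  simp only [innerSL_apply_apply, real_inner_smul_right, real_inner_self_eq_norm_sq] at h'
  have hcoeff (m : ι) : ⟪x, u m⟫ = f m := by rw [real_inner_comm, hu.inner_eq_of_hasSum h]
  simpa only [hcoeff, sq] using h'

theorem Orthonormal.hasSum_sq_sub_sum_inner_smul [DecidableEq ι] (hu : Orthonormal ℝ u)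
    (h : HasSum (fun m => ⟪u m, x⟫ • u m) x) (s : Finset ι) :
    HasSum (fun m => if m ∈ s then 0 else ⟪u m, x⟫ ^ 2)
      (‖x - ∑ i ∈ s, ⟪u i, x⟫ • u i‖ ^ 2) := by
  have hs : HasSum (fun m => if m ∈ s then ⟪u m, x⟫ • u m else 0) (∑ i ∈ s, ⟪u i, x⟫ • u i) := by
    simpa using hasSum_sum_of_ne_finset_zero (s := s) fun m hm => if_neg hm
  have htail := h.sub hs
  refine (hu.hasSum_sq_of_hasSum (f := fun m => if m ∈ s then 0 else ⟪u m, x⟫) ?_).congr_fun ?_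
  · convert htail using 2 with m
    split_ifs <;> simp
  · intro m
    split_ifs <;> simp

end OrthonormalExpansion

theorem HilbertBasis.hasSum_inner_sq {ι E : Type*} [NormedAddCommGroup E] [InnerProductSpace ℝ E]
    (e : HilbertBasis ι ℝ E) (x : E) : HasSum (fun n => ⟪x, e n⟫ ^ 2) (‖x‖ ^ 2) := by
  simpa only [sq, real_inner_comm x, real_inner_self_eq_norm_mul_norm] using
    e.hasSum_inner_mul_inner x x

/-- The squared Hilbert–Schmidt norm of the matrix with entries `⟪w m, e n⟫`, summed by columns
and by rows. -/
theorem HilbertBasis.tsum_ofReal_norm_sq_eq {ι κ E F : Type*}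
    [NormedAddCommGroup E] [InnerProductSpace ℝ E] [NormedAddCommGroup F] [InnerProductSpace ℝ F]
    (e : HilbertBasis ι ℝ E) {u : κ → F} (hu : Orthonormal ℝ u) (w : κ → E) {g : ι → F}
    (hg : ∀ n, HasSum (fun m => ⟪w m, e n⟫ • u m) (g n)) :
    ∑' n, ENNReal.ofReal (‖g n‖ ^ 2) = ∑' m, ENNReal.ofReal (‖w m‖ ^ 2) :=
  calc ∑' n, ENNReal.ofReal (‖g n‖ ^ 2)
      = ∑' n, ∑' m, ENNReal.ofReal (⟪w m, e n⟫ ^ 2) := by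
        refine tsum_congr fun n => ?_
        exact ENNReal.ofReal_eq_tsum_of_hasSum (fun _ => sq_nonneg _)
          (hu.hasSum_sq_of_hasSum (hg n))
    _ = ∑' m, ∑' n, ENNReal.ofReal (⟪w m, e n⟫ ^ 2) := ENNReal.tsum_comm
    _ = ∑' m, ENNReal.ofReal (‖w m‖ ^ 2) := by
        refine tsum_congr fun m => ?_
        exact (ENNReal.ofReal_eq_tsum_of_hasSum (fun _ => sq_nonneg _) (e.hasSum_inner_sq _)).symm

theorem LinearMap.IsSymmetricProjection.norm_sub_apply_le {E : Type*} [NormedAddCommGroup E]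
    [InnerProductSpace ℝ E] {p : E →ₗ[ℝ] E} (hp : p.IsSymmetricProjection) {s : E} (hs : p s = s)
    (x : E) : ‖x - p x‖ ≤ ‖x - s‖ := by
  set w := x - s
  have hpp : p (p w) = p w := congr($hp.isIdempotentElem.eq w)
  have horth : ⟪p w, w - p w⟫ = 0 := by
    rw [hp.isSymmetric, map_sub, hpp, sub_self, inner_zero_right]
  have hpyth := norm_add_sq_eq_norm_sq_add_norm_sq_real horth
  rw [add_sub_cancel] at hpyth
  have hxw : x - p x = w - p w := by simp only [w, map_sub, hs]; abel
  rw [hxw]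
  nlinarith [norm_nonneg (w - p w), norm_nonneg w, mul_self_nonneg ‖p w‖]

section StructuralBound

variable {ι H₁ H₂ : Type*} [NormedAddCommGroup H₁] [InnerProductSpace ℝ H₁]
  [NormedAddCommGroup H₂] [InnerProductSpace ℝ H₂]
  {A : H₁ → H₂} {σ : ℕ → ℝ} {u : ℕ → H₂} {v : ℕ → H₁} {k : ℕ} {z : Fin k → H₂}

theorem summable_sq_of_hasSum_svd (e : HilbertBasis ι ℝ H₁) (hu : Orthonormal ℝ u)
    (hv : Orthonormal ℝ v) (hSVD : ∀ x, HasSum (fun i => (σ i * ⟪v i, x⟫) • u i) (A x))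
    (hHS : Summable fun n => ‖A (e n)‖ ^ 2) : Summable fun m => σ m ^ 2 := by
  have h := e.tsum_ofReal_norm_sq_eq hu (fun m => σ m • v m) fun n => by
    simpa only [real_inner_smul_left] using hSVD (e n)
  simp only [norm_smul, hv.1, mul_one, Real.norm_eq_abs, sq_abs] at h
  rw [← ENNReal.ofReal_tsum_of_nonneg (fun _ => sq_nonneg _) hHS] at h
  exact (ENNReal.summable_toReal (h ▸ ENNReal.ofReal_ne_top)).congr fun m =>
    ENNReal.toReal_ofReal (sq_nonneg _)

/-- The `m`-th row, in the basis `u`, of `A - Z V_kᵀ`, where `Z` has columns `z i`. -/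
def approxErrorRow (σ : ℕ → ℝ) (u : ℕ → H₂) (v : ℕ → H₁) (z : Fin k → H₂) (m : ℕ) : H₁ :=
  σ m • v m - ∑ i : Fin k, ⟪u m, z i⟫ • v i

theorem hasSum_approxErrorRow (hSVD : ∀ x, HasSum (fun i => (σ i * ⟪v i, x⟫) • u i) (A x))
    (hz : ∀ l, HasSum (fun m => ⟪u m, z l⟫ • u m) (z l)) (x : H₁) :
    HasSum (fun m => ⟪approxErrorRow σ u v z m, x⟫ • u m) (A x - ∑ i : Fin k, ⟪v i, x⟫ • z i) := by
  have hZ : HasSum (fun m => ∑ i : Fin k, ⟪v i, x⟫ • ⟪u m, z i⟫ • u m)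
      (∑ i : Fin k, ⟪v i, x⟫ • z i) :=
    hasSum_sum fun i _ => (hz i).const_smul _
  convert (hSVD x).sub hZ using 2 with m
  simp only [approxErrorRow, inner_sub_left, real_inner_smul_left, sum_inner, sub_smul,
    Finset.sum_smul, smul_smul, mul_comm]

theorem norm_approxErrorRow_sq (hv : Orthonormal ℝ v)
    (hzk : ∀ i l : Fin k, ⟪u i, z l⟫ = if i = l then σ i else 0) (m : ℕ) :
    ‖approxErrorRow σ u v z m‖ ^ 2 = if k ≤ m then σ m ^ 2 + ∑ l, ⟪u m, z l⟫ ^ 2 else 0 := by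
  classical
  by_cases hm : k ≤ m
  · have horth : ⟪σ m • v m, ∑ i : Fin k, ⟪u m, z i⟫ • v i⟫ = 0 := by
      refine (inner_sum _ _ _).trans (Finset.sum_eq_zero fun i _ => ?_)
      have hmi : m ≠ i := by have := i.isLt; omega
      rw [real_inner_smul_left, real_inner_smul_right, orthonormal_iff_ite.mp hv, if_neg hmi]
      ring
    have hVk : Orthonormal ℝ (fun i : Fin k => v i) := hv.comp _ Fin.val_injective
    have hcols : ‖∑ i : Fin k, ⟪u m, z i⟫ • v i‖ * ‖∑ i : Fin k, ⟪u m, z i⟫ • v i‖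
        = ∑ l, ⟪u m, z l⟫ ^ 2 := by
      rw [← real_inner_self_eq_norm_mul_norm, hVk.inner_sum]
      simp [sq]
    rw [if_pos hm, approxErrorRow, sq, norm_sub_sq_eq_norm_sq_add_norm_sq_real horth, hcols,
      norm_smul, hv.1, mul_one, Real.norm_eq_abs, abs_mul_abs_self, sq]
  · have hrow : ∑ i : Fin k, ⟪u m, z i⟫ • v i = σ m • v m := by
      simp [hzk ⟨m, by omega⟩]
    rw [if_neg hm, approxErrorRow, hrow, sub_self, norm_zero, sq, mul_zero]

theorem tsum_ofReal_norm_sq_sub_sum_smul (e : HilbertBasis ι ℝ H₁) (hu : Orthonormal ℝ u)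
    (hv : Orthonormal ℝ v) (hSVD : ∀ x, HasSum (fun i => (σ i * ⟪v i, x⟫) • u i) (A x))
    (hz : ∀ l, HasSum (fun m => ⟪u m, z l⟫ • u m) (z l))
    (hzk : ∀ i l : Fin k, ⟪u i, z l⟫ = if i = l then σ i else 0) :
    ∑' n, ENNReal.ofReal (‖A (e n) - ∑ i : Fin k, ⟪v i, e n⟫ • z i‖ ^ 2)
      = ∑' m, ENNReal.ofReal (if k ≤ m then σ m ^ 2 else 0)
        + ∑ l, ENNReal.ofReal (‖z l - ∑ i : Fin k, ⟪u i, z l⟫ • u i‖ ^ 2) := by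
  have hres (l : Fin k) : ENNReal.ofReal (‖z l - ∑ i : Fin k, ⟪u i, z l⟫ • u i‖ ^ 2)
      = ∑' m, ENNReal.ofReal (if k ≤ m then ⟪u m, z l⟫ ^ 2 else 0) := by
    rw [Fin.sum_univ_eq_sum_range (fun i => ⟪u i, z l⟫ • u i)]
    refine ENNReal.ofReal_eq_tsum_of_hasSum (fun m => by positivity)
      ((hu.hasSum_sq_sub_sum_inner_smul (hz l) (Finset.range k)).congr_fun fun m => ?_)
    simp only [Finset.mem_range, ← not_le, ite_not]
  rw [e.tsum_ofReal_norm_sq_eq hu _ (hasSum_approxErrorRow hSVD hz <| e ·)]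
  simp_rw [hres, norm_approxErrorRow_sq hv hzk]
  rw [← Summable.tsum_finsetSum fun _ _ => ENNReal.summable, ← ENNReal.tsum_add]
  refine tsum_congr fun m => ?_
  split_ifs
  · rw [ENNReal.ofReal_add (by positivity) (by positivity),
      ENNReal.ofReal_sum_of_nonneg fun _ _ => by positivity]
  · simp

theorem tsum_norm_sub_apply_sq_le (e : HilbertBasis ι ℝ H₁) (hu : Orthonormal ℝ u)
    (hv : Orthonormal ℝ v) (hSVD : ∀ x, HasSum (fun i => (σ i * ⟪v i, x⟫) • u i) (A x))
    (hHS : Summable fun n => ‖A (e n)‖ ^ 2)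
    (hz : ∀ l, HasSum (fun m => ⟪u m, z l⟫ • u m) (z l))
    (hzk : ∀ i l : Fin k, ⟪u i, z l⟫ = if i = l then σ i else 0)
    {P : H₂ →ₗ[ℝ] H₂} (hP : P.IsSymmetricProjection) (hPz : ∀ l, P (z l) = z l) :
    ∑' n, ‖A (e n) - P (A (e n))‖ ^ 2
      ≤ ∑' m, (if k ≤ m then σ m ^ 2 else 0)
        + ∑ l, ‖z l - ∑ i : Fin k, ⟪u i, z l⟫ • u i‖ ^ 2 := by
  have hle (n : ι) : ‖A (e n) - P (A (e n))‖ ^ 2 ≤ ‖A (e n) - ∑ i : Fin k, ⟪v i, e n⟫ • z i‖ ^ 2 :=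
    pow_le_pow_left₀ (norm_nonneg _) (hP.norm_sub_apply_le (by simp [hPz]) _) 2
  have hsum : Summable fun n => ‖A (e n) - P (A (e n))‖ ^ 2 :=
    hHS.of_nonneg_of_le (fun _ => sq_nonneg _) fun n =>
      pow_le_pow_left₀ (norm_nonneg _) (by simpa using hP.norm_sub_apply_le (map_zero P) _) 2
  have htail : Summable fun m => if k ≤ m then σ m ^ 2 else 0 :=
    (summable_sq_of_hasSum_svd e hu hv hSVD hHS).of_nonneg_of_le (fun _ => by positivity)
      fun m => by split_ifs <;> simp [sq_nonneg]
  have hrhs : 0 ≤ ∑' m, (if k ≤ m then σ m ^ 2 else 0) := tsum_nonneg fun _ => by positivity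
  refine (ENNReal.ofReal_le_ofReal_iff (by positivity)).mp ?_
  rw [ENNReal.ofReal_add hrhs (by positivity),
    ENNReal.ofReal_tsum_of_nonneg (fun _ => by positivity) hsum,
    ENNReal.ofReal_tsum_of_nonneg (fun _ => by positivity) htail,
    ENNReal.ofReal_sum_of_nonneg fun _ _ => by positivity,
    ← tsum_ofReal_norm_sq_sub_sum_smul e hu hv hSVD hz hzk]
  exact ENNReal.tsum_le_tsum fun n => ENNReal.ofReal_le_ofReal (hle n)

end StructuralBound

theorem randomized_svd_structural_bound_general
    {H₁ H₂ : Type*}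
    [NormedAddCommGroup H₁] [InnerProductSpace ℝ H₁]
    [NormedAddCommGroup H₂] [InnerProductSpace ℝ H₂]
    (A : H₁ →L[ℝ] H₂)
    (e : HilbertBasis ℕ ℝ H₁)
    (σ : ℕ → ℝ) (u : ℕ → H₂) (v : ℕ → H₁)
    (hu : Orthonormal ℝ u) (hv : Orthonormal ℝ v)
    (hSVD : ∀ x : H₁, HasSum (fun i => (σ i * ⟪v i, x⟫) • u i) (A x))
    (hHS : Summable fun i => ‖A (e i)‖ ^ 2)
    (k p : ℕ)
    (ω : ℕ → Fin (k + p) → ℝ)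
    (y : Fin (k + p) → H₂)
    (hy : ∀ j, HasSum (fun i => (ω i j * σ i) • u i) (y j))
    (hrank : IsUnit ((Matrix.of fun (i : Fin k) (j : Fin (k + p)) => ω i j)
        * (Matrix.of fun (i : Fin k) (j : Fin (k + p)) => ω i j).transpose).det)
    (P : H₂ →L[ℝ] H₂)
    (hPidem : P ∘L P = P)
    (hPsa : ∀ x z : H₂, ⟪P x, z⟫ = ⟪x, P z⟫)
    (hPfix : ∀ z ∈ Submodule.span ℝ (Set.range y), P z = z) :
    ∑' i, ‖A (e i) - P (A (e i))‖ ^ 2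
      ≤ (∑' i, (if k ≤ i then (σ i) ^ 2 else 0))
        + ∑ l : Fin k,
            ‖(∑ j : Fin (k + p),
                (((Matrix.of fun (i : Fin k) (j : Fin (k + p)) => ω i j).transpose
                  * ((Matrix.of fun (i : Fin k) (j : Fin (k + p)) => ω i j)
                    * (Matrix.of fun (i : Fin k) (j : Fin (k + p)) => ω i j).transpose)⁻¹) j l) • y j)
              - ∑ i : Fin k, ⟪u i, (∑ j : Fin (k + p),
                  (((Matrix.of fun (i : Fin k) (j : Fin (k + p)) => ω i j).transpose
                    * ((Matrix.of fun (i : Fin k) (j : Fin (k + p)) => ω i j)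
                      * (Matrix.of fun (i : Fin k) (j : Fin (k + p)) => ω i j).transpose)⁻¹) j l) • y j)⟫
                • u i‖ ^ 2 := by
  set Ω : Matrix (Fin k) (Fin (k + p)) ℝ := Matrix.of fun i j => ω i j
  set X := Ωᵀ * (Ω * Ωᵀ)⁻¹
  have hΩX : Ω * X = 1 := by rw [← Matrix.mul_assoc]; exact Matrix.mul_nonsing_inv _ hrank
  have hz (l : Fin k) :
      HasSum (fun m => (σ m * ∑ j, ω m j * X j l) • u m) (∑ j, X j l • y j) := by
    convert hasSum_sum fun j _ => (hy j).const_smul (X j l) using 2 with m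
    simp only [smul_smul, ← Finset.sum_smul, Finset.mul_sum]
    exact congr_arg (· • u m) (Finset.sum_congr rfl fun j _ => by ring)
  refine tsum_norm_sub_apply_sq_le e hu hv hSVD hHS (fun l => hu.hasSum_inner_smul_of_hasSum (hz l))
    (fun i l => ?_) (P := P) ⟨?_, hPsa⟩ fun l => hPfix _ ?_
  · rw [hu.inner_eq_of_hasSum (hz l)]
    have hentry : ∑ j, ω i j * X j l = if i = l then 1 else 0 := congr_fun₂ hΩX i l
    rw [hentry, mul_ite, mul_one, mul_zero]
  · ext x; exact congr($hPidem x)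
  · exact Submodule.sum_mem _ fun j _ => Submodule.smul_mem _ _ (Submodule.subset_span ⟨j, rfl⟩)

/-- structural bound for the infinite-dimensional randomized SVD.
Let `A : H₁ → H₂` be Hilbert–Schmidt with SVD `A = ∑ᵢ σᵢ ⟨vᵢ, ·⟩ uᵢ`. Let
`y_j = ∑ᵢ ω_{ij} σᵢ uᵢ` (`j = 0, …, k+p-1`) be the columns of the quasi-matrix `Y`,
let `Ωₖ = [ω_{ij}]_{i<k, j<k+p}` have full row rank `k` (i.e. `Ωₖ Ωₖᵀ` invertible,
so that `Ωₖ† = Ωₖᵀ (Ωₖ Ωₖᵀ)⁻¹`), and let `P = Q Q*` be the orthogonal projection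
onto `range(Y)`. Then
`‖A − P A‖²_HS ≤ ∑_{i ≥ k} σᵢ² + ‖(Id − U_k U_k*) Y Ωₖ†‖²_HS`. -/
theorem randomized_svd_structural_bound
    {H₁ H₂ : Type*}
    [NormedAddCommGroup H₁] [InnerProductSpace ℝ H₁] [CompleteSpace H₁]
    [NormedAddCommGroup H₂] [InnerProductSpace ℝ H₂] [CompleteSpace H₂]
    (A : H₁ →L[ℝ] H₂)
    (e : HilbertBasis ℕ ℝ H₁)
    (σ : ℕ → ℝ) (u : ℕ → H₂) (v : ℕ → H₁)
    (hu : Orthonormal ℝ u) (hv : Orthonormal ℝ v)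
    (hσ : ∀ i, 0 ≤ σ i) (hσmono : Antitone σ)
    (hSVD : ∀ x : H₁, HasSum (fun i => (σ i * ⟪v i, x⟫) • u i) (A x))
    (hHS : Summable fun i => ‖A (e i)‖ ^ 2)
    (k p : ℕ)
    (ω : ℕ → Fin (k + p) → ℝ)
    (y : Fin (k + p) → H₂)
    (hy : ∀ j, HasSum (fun i => (ω i j * σ i) • u i) (y j))
    (hrank : IsUnit ((Matrix.of fun (i : Fin k) (j : Fin (k + p)) => ω i j)
        * (Matrix.of fun (i : Fin k) (j : Fin (k + p)) => ω i j).transpose).det)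
    (P : H₂ →L[ℝ] H₂)
    (hPidem : P ∘L P = P)
    (hPsa : ∀ x z : H₂, ⟪P x, z⟫ = ⟪x, P z⟫)
    (hPmem : ∀ x : H₂, P x ∈ Submodule.span ℝ (Set.range y))
    (hPfix : ∀ z ∈ Submodule.span ℝ (Set.range y), P z = z) :
    ∑' i, ‖A (e i) - P (A (e i))‖ ^ 2
      ≤ (∑' i, (if k ≤ i then (σ i) ^ 2 else 0))
        + ∑ l : Fin k,
            ‖(∑ j : Fin (k + p),
                (((Matrix.of fun (i : Fin k) (j : Fin (k + p)) => ω i j).transpose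
                  * ((Matrix.of fun (i : Fin k) (j : Fin (k + p)) => ω i j)
                    * (Matrix.of fun (i : Fin k) (j : Fin (k + p)) => ω i j).transpose)⁻¹) j l) • y j)
              - ∑ i : Fin k, ⟪u i, (∑ j : Fin (k + p),
                  (((Matrix.of fun (i : Fin k) (j : Fin (k + p)) => ω i j).transpose
                    * ((Matrix.of fun (i : Fin k) (j : Fin (k + p)) => ω i j)
                      * (Matrix.of fun (i : Fin k) (j : Fin (k + p)) => ω i j).transpose)⁻¹) j l) • y j)⟫
                • u i‖ ^ 2 :=
  randomized_svd_structural_bound_general A e σ u v hu hv hSVD hHS k p ω y hy hrank P hPidem hPsa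
    hPfix
end

section
/- Let H be a Hilbert space and Y, Ŷ : ℝʳ → H be injective bounded linear maps whose ranges are r-dimensional. Let P_Y and P_Ŷ denote the orthogonal projections of H onto range(Y) and range(Ŷ), respectively. Then ‖P_Y − P_Ŷ‖_op ≤ min{‖Y†‖_op, ‖Ŷ†‖_op} · ‖Y − Ŷ‖_op, where Y† = (Y*Y)⁻¹Y* is the Moore–Penrose pseudoinverse. -/
set_option maxHeartbeats 1000000
open scoped RealInnerProductSpace
open ContinuousLinearMap

section Aux
variable {H : Type*} [NormedAddCommGroup H] [InnerProductSpace ℝ H] [CompleteSpace H] {r : ℕ}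

private lemma sq_le_helper {a b : ℝ} (ha : 0 ≤ a) (hb : 0 ≤ b) (h : a ^ 2 ≤ b ^ 2) : a ≤ b := by
  nlinarith

private lemma lower_bound_transfer (B : EuclideanSpace ℝ (Fin r) →L[ℝ] EuclideanSpace ℝ (Fin r))
    {c : ℝ} (hc : 0 < c) (h : ∀ y, c * ‖y‖ ≤ ‖adjoint B y‖) :
    ∀ x, c * ‖x‖ ≤ ‖B x‖ := by
  set T := adjoint B with hT
  have hinj : Function.Injective T := by
    intro a b hab
    have h2 := h (a - b)
    rw [map_sub, hab, sub_self, norm_zero] at h2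
    have h3 : ‖a - b‖ ≤ 0 := by nlinarith [norm_nonneg (a - b)]
    have h4 := le_antisymm h3 (norm_nonneg _)
    rwa [norm_eq_zero, sub_eq_zero] at h4
  have hinj' : Function.Injective (T : EuclideanSpace ℝ (Fin r) →ₗ[ℝ] EuclideanSpace ℝ (Fin r)) := hinj
  have hsurj := LinearMap.injective_iff_surjective.mp hinj'
  set e := LinearEquiv.ofBijective _ ⟨hinj', hsurj⟩ with he
  set S : EuclideanSpace ℝ (Fin r) →L[ℝ] EuclideanSpace ℝ (Fin r) :=
    LinearMap.toContinuousLinearMap (e.symm : _ →ₗ[ℝ] _) with hS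
  have hSapp : ∀ y, S y = e.symm y := fun y => rfl
  have hTS : ∀ y, T (S y) = y := fun y => by
    rw [hSapp]; exact e.apply_symm_apply y
  have hSB : ∀ x, adjoint S (B x) = x := by
    intro x
    apply ext_inner_right ℝ
    intro y
    rw [adjoint_inner_left]
    have hBT : B = adjoint T := by rw [hT, adjoint_adjoint]
    rw [hBT, adjoint_inner_left, hTS]
  have hSnorm : ‖adjoint S‖ ≤ c⁻¹ := by
    rw [LinearIsometryEquiv.norm_map]
    refine opNorm_le_bound _ (by positivity) (fun y => ?_)
    have h6 := h (S y)
    rw [hTS] at h6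
    rw [inv_mul_eq_div, le_div_iff₀ hc, mul_comm]
    exact h6
  intro x
  have h5 : ‖x‖ ≤ c⁻¹ * ‖B x‖ := by
    calc ‖x‖ = ‖adjoint S (B x)‖ := by rw [hSB]
    _ ≤ ‖adjoint S‖ * ‖B x‖ := le_opNorm _ _
    _ ≤ c⁻¹ * ‖B x‖ := by gcongr
  have h7 := mul_le_mul_of_nonneg_left h5 hc.le
  rwa [← mul_assoc, mul_inv_cancel₀ hc.ne', one_mul] at h7

private lemma exists_isometry_range (W : EuclideanSpace ℝ (Fin r) →L[ℝ] H)
    (hW : Function.Injective W) :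
    ∃ E : EuclideanSpace ℝ (Fin r) →L[ℝ] H,
      (∀ x y : EuclideanSpace ℝ (Fin r), ⟪E x, E y⟫ = ⟪x, y⟫) ∧
      (∀ x, ∃ u, E x = W u) ∧ (∀ u, ∃ x, E x = W u) := by
  set U : Submodule ℝ H := LinearMap.range (W : EuclideanSpace ℝ (Fin r) →ₗ[ℝ] H) with hU
  have hWinj : Function.Injective (W : EuclideanSpace ℝ (Fin r) →ₗ[ℝ] H) := hW
  have hfin : FiniteDimensional ℝ U := inferInstance
  have hrank : Module.finrank ℝ U = r := by
    rw [hU, LinearMap.finrank_range_of_inj hWinj, finrank_euclideanSpace_fin]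
  let b : OrthonormalBasis (Fin r) ℝ U :=
    (stdOrthonormalBasis ℝ U).reindex (finCongr hrank)
  let iso : EuclideanSpace ℝ (Fin r) ≃ₗᵢ[ℝ] U := b.repr.symm
  refine ⟨U.subtypeL.comp iso.toLinearIsometry.toContinuousLinearMap, ?_, ?_, ?_⟩
  · intro x y
    rw [show (U.subtypeL.comp iso.toLinearIsometry.toContinuousLinearMap) x = ↑(iso x) from rfl,
        show (U.subtypeL.comp iso.toLinearIsometry.toContinuousLinearMap) y = ↑(iso y) from rfl,
        ← Submodule.coe_inner]
    exact iso.inner_map_map x y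
  · intro x
    obtain ⟨u, hu⟩ := LinearMap.mem_range.mp (iso x).2
    exact ⟨u, by simpa using hu.symm⟩
  · intro u
    have hmem : W u ∈ U := ⟨u, rfl⟩
    refine ⟨iso.symm ⟨W u, hmem⟩, ?_⟩
    show ((iso (iso.symm ⟨W u, hmem⟩) : U) : H) = W u
    rw [iso.apply_symm_apply]

private lemma proj_eq_isometry (P : H →L[ℝ] H) (E : EuclideanSpace ℝ (Fin r) →L[ℝ] H)
    (hPsa : ∀ x z : H, ⟪P x, z⟫ = ⟪x, P z⟫)
    (hE : ∀ x y, ⟪E x, E y⟫ = ⟪x, y⟫)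
    (hfix : ∀ x, P (E x) = E x)
    (hsurj : ∀ h, ∃ x, E x = P h) :
    ∀ h, E (adjoint E h) = P h := by
  intro h
  obtain ⟨x₀, hx₀⟩ := hsurj h
  have hzero : ⟪E (adjoint E h) - P h, E (adjoint E h) - P h⟫ = 0 := by
    have hd : E (adjoint E h) - P h = E (adjoint E h - x₀) := by rw [map_sub, hx₀]
    nth_rewrite 1 [hd]
    rw [inner_sub_right]
    have h1 : ⟪E (adjoint E h - x₀), E (adjoint E h)⟫ = ⟪adjoint E h - x₀, adjoint E h⟫ := hE _ _
    have h2 : ⟪E (adjoint E h - x₀), P h⟫ = ⟪P (E (adjoint E h - x₀)), h⟫ := (hPsa _ _).symm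
    have h3 : ⟪E (adjoint E h - x₀), h⟫ = ⟪adjoint E h - x₀, adjoint E h⟫ := by
      rw [← adjoint_inner_right]
    rw [h1, h2, hfix, h3, sub_self]
  exact sub_eq_zero.mp (inner_self_eq_zero.mp hzero)

private lemma key_onesided
    (Y Yh : EuclideanSpace ℝ (Fin r) →L[ℝ] H)
    (hYinj : Function.Injective Y) (hYhinj : Function.Injective Yh)
    (Ydag Yhdag : H →L[ℝ] EuclideanSpace ℝ (Fin r))
    (PY PYh : H →L[ℝ] H)
    (hYd1 : Ydag ∘L Y = ContinuousLinearMap.id ℝ _)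
    (hYd2 : Y ∘L Ydag = PY)
    (hPYsa : ∀ x z : H, ⟪PY x, z⟫ = ⟪x, PY z⟫)
    (hYhd1 : Yhdag ∘L Yh = ContinuousLinearMap.id ℝ _)
    (hYhd2 : Yh ∘L Yhdag = PYh)
    (hPYhsa : ∀ x z : H, ⟪PYh x, z⟫ = ⟪x, PYh z⟫) :
    ‖PY - PYh‖ ≤ ‖Yhdag‖ * ‖Y - Yh‖ := by
  set ε := ‖Yhdag‖ * ‖Y - Yh‖ with hεdef
  have hε0 : 0 ≤ ε := mul_nonneg (norm_nonneg _) (norm_nonneg _)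
  -- pointwise versions of the hypotheses
  have hYd1' : ∀ u, Ydag (Y u) = u := fun u => by
    simpa using ContinuousLinearMap.ext_iff.mp hYd1 u
  have hYhd1' : ∀ u, Yhdag (Yh u) = u := fun u => by
    simpa using ContinuousLinearMap.ext_iff.mp hYhd1 u
  have hPapp : ∀ x, PY x = Y (Ydag x) := fun x => by
    simpa using (ContinuousLinearMap.ext_iff.mp hYd2 x).symm
  have hQapp : ∀ x, PYh x = Yh (Yhdag x) := fun x => by
    simpa using (ContinuousLinearMap.ext_iff.mp hYhd2 x).symm
  have hPP : ∀ x, PY (PY x) = PY x := fun x => by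
    rw [hPapp x, hPapp (Y (Ydag x)), hYd1']
  have hQQ : ∀ x, PYh (PYh x) = PYh x := fun x => by
    rw [hQapp x, hQapp (Yh (Yhdag x)), hYhd1']
  have hPfix : ∀ u, PY (Y u) = Y u := fun u => by rw [hPapp, hYd1']
  have hQfix : ∀ u, PYh (Yh u) = Yh u := fun u => by rw [hQapp, hYhd1']
  -- orthogonality to range of Y for vectors killed by PY
  have horthY : ∀ y, PY y = 0 → ∀ u, ⟪y, Y u⟫ = 0 := by
    intro y hy u
    calc ⟪y, Y u⟫ = ⟪y, PY (Y u)⟫ := by rw [hPfix u]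
    _ = ⟪PY y, Y u⟫ := (hPYsa y (Y u)).symm
    _ = 0 := by rw [hy, inner_zero_left]
  -- the generic inner-product estimate
  have hest : ∀ y z : H, PY y = 0 → PYh z = z → ⟪y, z⟫ ≤ ε * (‖y‖ * ‖z‖) := by
    intro y z hy hz
    have hzz : z = Yh (Yhdag z) := by rw [← hQapp, hz]
    have h1 : ⟪y, z⟫ = ⟪y, (Yh - Y) (Yhdag z)⟫ := by
      nth_rewrite 1 [hzz]
      rw [ContinuousLinearMap.sub_apply, inner_sub_right, horthY y hy, sub_zero]
    rw [h1]
    calc ⟪y, (Yh - Y) (Yhdag z)⟫ ≤ ‖y‖ * ‖(Yh - Y) (Yhdag z)‖ := real_inner_le_norm _ _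
    _ ≤ ‖y‖ * (‖Yh - Y‖ * ‖Yhdag z‖) := by gcongr; exact le_opNorm _ _
    _ ≤ ‖y‖ * (‖Yh - Y‖ * (‖Yhdag‖ * ‖z‖)) := by gcongr; exact le_opNorm _ _
    _ = ε * (‖y‖ * ‖z‖) := by rw [hεdef, norm_sub_rev]; ring
  -- Step B : PY y = 0 → ‖PYh y‖ ≤ ε ‖y‖
  have stepB : ∀ y, PY y = 0 → ‖PYh y‖ ≤ ε * ‖y‖ := by
    intro y hy
    set z := PYh y with hz
    have hQz : PYh z = z := hQQ y
    have h1 : ‖z‖ * ‖z‖ = ⟪y, z⟫ := by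
      calc ‖z‖ * ‖z‖ = ⟪z, z⟫ := (real_inner_self_eq_norm_mul_norm z).symm
      _ = ⟪PYh y, z⟫ := by rw [hz]
      _ = ⟪y, PYh z⟫ := hPYhsa y z
      _ = ⟪y, z⟫ := by rw [hQz]
    have h2 := hest y z hy hQz
    rcases eq_or_lt_of_le (norm_nonneg z) with h0 | h0
    · rw [← h0]; positivity
    · have h3 : ‖z‖ * ‖z‖ ≤ (ε * ‖y‖) * ‖z‖ := by rw [h1]; nlinarith
      exact le_of_mul_le_mul_right h3 h0
  -- Step B' : PYh w = w → ‖w - PY w‖ ≤ ε ‖w‖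
  have stepB' : ∀ w, PYh w = w → ‖w - PY w‖ ≤ ε * ‖w‖ := by
    intro w hw
    set y := w - PY w with hy
    have hPy : PY y = 0 := by rw [hy, map_sub, hPP, sub_self]
    have h1 : ‖y‖ * ‖y‖ = ⟪y, w⟫ := by
      calc ‖y‖ * ‖y‖ = ⟪y, y⟫ := (real_inner_self_eq_norm_mul_norm y).symm
      _ = ⟪y, w⟫ - ⟪y, PY w⟫ := by rw [hy]; nth_rewrite 1 [inner_sub_right]; rfl
      _ = ⟪y, w⟫ := by
          have : ⟪y, PY w⟫ = ⟪PY y, w⟫ := (hPYsa y w).symm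
          rw [this, hPy, inner_zero_left, sub_zero]
    have h2 := hest y w hPy hw
    rcases eq_or_lt_of_le (norm_nonneg y) with h0 | h0
    · rw [← h0]; positivity
    · have h3 : ‖y‖ * ‖y‖ ≤ (ε * ‖w‖) * ‖y‖ := by rw [h1]; nlinarith
      exact le_of_mul_le_mul_right h3 h0
  -- norm identity ‖v - PYh v‖² = ‖v‖² - ‖PYh v‖²
  have hidQ : ∀ v : H, ‖v - PYh v‖ ^ 2 = ‖v‖ ^ 2 - ‖PYh v‖ ^ 2 := by
    intro v
    have h1 : ⟪v, PYh v⟫ = ‖PYh v‖ ^ 2 := by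
      calc ⟪v, PYh v⟫ = ⟪v, PYh (PYh v)⟫ := by rw [hQQ]
      _ = ⟪PYh v, PYh v⟫ := (hPYhsa v (PYh v)).symm
      _ = ‖PYh v‖ ^ 2 := real_inner_self_eq_norm_sq _
    rw [@norm_sub_sq_real, h1]; ring
  have hidP : ∀ v : H, ‖v - PY v‖ ^ 2 = ‖v‖ ^ 2 - ‖PY v‖ ^ 2 := by
    intro v
    have h1 : ⟪v, PY v⟫ = ‖PY v‖ ^ 2 := by
      calc ⟪v, PY v⟫ = ⟪v, PY (PY v)⟫ := by rw [hPP]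
      _ = ⟪PY v, PY v⟫ := (hPYsa v (PY v)).symm
      _ = ‖PY v‖ ^ 2 := real_inner_self_eq_norm_sq _
    rw [@norm_sub_sq_real, h1]; ring
  -- Step C : PY v = v → ‖v - PYh v‖ ≤ ε ‖v‖   (the crux)
  have stepC : ∀ v, PY v = v → ‖v - PYh v‖ ≤ ε * ‖v‖ := by
    intro v hv
    rcases le_or_gt 1 ε with hε1 | hε1
    · have h2 : ‖v - PYh v‖ ^ 2 ≤ ‖v‖ ^ 2 := by
        rw [hidQ]; nlinarith [sq_nonneg ‖PYh v‖]
      have h3 : ‖v - PYh v‖ ≤ ‖v‖ := sq_le_helper (norm_nonneg _) (norm_nonneg _) h2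
      calc ‖v - PYh v‖ ≤ ‖v‖ := h3
      _ = 1 * ‖v‖ := (one_mul _).symm
      _ ≤ ε * ‖v‖ := by gcongr
    · have hc2 : 0 < 1 - ε ^ 2 := by nlinarith
      set c := Real.sqrt (1 - ε ^ 2) with hcdef
      have hc : 0 < c := Real.sqrt_pos.mpr hc2
      have hcsq : c ^ 2 = 1 - ε ^ 2 := Real.sq_sqrt hc2.le
      obtain ⟨E, hEinner, hErange1, hErange2⟩ := exists_isometry_range Y hYinj
      obtain ⟨F, hFinner, hFrange1, hFrange2⟩ := exists_isometry_range Yh hYhinj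
      have hEnorm : ∀ x, ‖E x‖ = ‖x‖ := fun x => by
        have h1 := hEinner x x
        rw [real_inner_self_eq_norm_mul_norm, real_inner_self_eq_norm_mul_norm] at h1
        exact mul_self_inj (norm_nonneg _) (norm_nonneg _) |>.mp h1
      have hFnorm : ∀ x, ‖F x‖ = ‖x‖ := fun x => by
        have h1 := hFinner x x
        rw [real_inner_self_eq_norm_mul_norm, real_inner_self_eq_norm_mul_norm] at h1
        exact mul_self_inj (norm_nonneg _) (norm_nonneg _) |>.mp h1
      have hEfix : ∀ x, PY (E x) = E x := fun x => by
        obtain ⟨u, hu⟩ := hErange1 x; rw [hu, hPfix]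
      have hFfix : ∀ x, PYh (F x) = F x := fun x => by
        obtain ⟨u, hu⟩ := hFrange1 x; rw [hu, hQfix]
      have hEonto : ∀ h, ∃ x, E x = PY h := fun h => by
        obtain ⟨x, hx⟩ := hErange2 (Ydag h); exact ⟨x, by rw [hx, ← hPapp h]⟩
      have hFonto : ∀ h, ∃ x, F x = PYh h := fun h => by
        obtain ⟨x, hx⟩ := hFrange2 (Yhdag h); exact ⟨x, by rw [hx, ← hQapp h]⟩
      have hEP := proj_eq_isometry PY E hPYsa hEinner hEfix hEonto
      have hFP := proj_eq_isometry PYh F hPYhsa hFinner hFfix hFonto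
      set B := (adjoint F) ∘L E with hB
      have hBx : ∀ x, ‖B x‖ = ‖PYh (E x)‖ := fun x => by
        rw [← hFP (E x), hFnorm]; rfl
      have hBadj : ∀ y, ‖adjoint B y‖ = ‖PY (F y)‖ := fun y => by
        have h1 : adjoint B y = adjoint E (F y) := by
          rw [hB, adjoint_comp, adjoint_adjoint]; rfl
        rw [h1, ← hEnorm (adjoint E (F y)), hEP]
      have hBlow : ∀ y, c * ‖y‖ ≤ ‖adjoint B y‖ := by
        intro y
        have hQFy : PYh (F y) = F y := hFfix y
        have hw := stepB' (F y) hQFy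
        have hid := hidP (F y)
        rw [hBadj]
        have ha := norm_nonneg (PY (F y))
        have hb := norm_nonneg (F y)
        have hcy : 0 ≤ c * ‖y‖ := mul_nonneg hc.le (norm_nonneg _)
        apply sq_le_helper hcy ha
        have hFy : ‖F y‖ = ‖y‖ := hFnorm y
        have hsq := pow_le_pow_left₀ (norm_nonneg (F y - PY (F y))) hw 2
        rw [hFy] at hsq hid
        have hkey2 : (c * ‖y‖) ^ 2 = ‖y‖ ^ 2 - (ε * ‖y‖) ^ 2 := by
          rw [mul_pow, hcsq, mul_pow]; ring
        linarith [hsq, hid, hkey2]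
      have hlow := lower_bound_transfer B hc hBlow
      obtain ⟨x, hx⟩ := hEonto v
      rw [hv] at hx
      have h4 : c * ‖v‖ ≤ ‖PYh v‖ := by
        have h5 := hlow x
        rw [hBx x, hx] at h5
        rwa [← hEnorm x, hx] at h5
      have h6 : ‖v - PYh v‖ ^ 2 ≤ (ε * ‖v‖) ^ 2 := by
        rw [hidQ]
        have hsq := pow_le_pow_left₀ (mul_nonneg hc.le (norm_nonneg v)) h4 2
        have hkey2 : (c * ‖v‖) ^ 2 = ‖v‖ ^ 2 - (ε * ‖v‖) ^ 2 := by
          rw [mul_pow, hcsq, mul_pow]; ring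
        linarith [hsq, hkey2]
      exact sq_le_helper (norm_nonneg _) (mul_nonneg hε0 (norm_nonneg _)) h6
  -- final assembly
  refine opNorm_le_bound _ hε0 (fun x => ?_)
  rw [ContinuousLinearMap.sub_apply]
  have hA1 := stepC (PY x) (hPP x)
  have hA2 := stepB (x - PY x) (by rw [map_sub, hPP, sub_self])
  have hsplit : PY x - PYh x = (PY x - PYh (PY x)) - PYh (x - PY x) := by
    rw [map_sub]; abel
  have horth2 : ⟪PY x - PYh (PY x), PYh (x - PY x)⟫ = 0 := by
    have h1 : ⟪PYh (PY x - PYh (PY x)), x - PY x⟫ = ⟪PY x - PYh (PY x), PYh (x - PY x)⟫ :=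
      hPYhsa _ _
    rw [← h1, map_sub, hQQ, sub_self, inner_zero_left]
  have hpyth1 : ‖PY x - PYh x‖ ^ 2 = ‖PY x - PYh (PY x)‖ ^ 2 + ‖PYh (x - PY x)‖ ^ 2 := by
    rw [hsplit, @norm_sub_sq_real, horth2]; ring
  have hpyth2 : ‖PY x‖ ^ 2 + ‖x - PY x‖ ^ 2 = ‖x‖ ^ 2 := by
    linarith [hidP x]
  have hsq1 := pow_le_pow_left₀ (norm_nonneg (PY x - PYh (PY x))) hA1 2
  have hsq2 := pow_le_pow_left₀ (norm_nonneg (PYh (x - PY x))) hA2 2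
  have hkey3 : (ε * ‖PY x‖) ^ 2 + (ε * ‖x - PY x‖) ^ 2 = (ε * ‖x‖) ^ 2 := by
    linear_combination (ε ^ 2) * hpyth2
  have h6 : ‖PY x - PYh x‖ ^ 2 ≤ (ε * ‖x‖) ^ 2 := by
    rw [hpyth1]
    linarith [hsq1, hsq2, hkey3]
  exact sq_le_helper (norm_nonneg _) (mul_nonneg hε0 (norm_nonneg _)) h6


end Aux

/-- perturbation of orthogonal projectors. Let `Y, Ŷ : ℝʳ → H` be
injective bounded linear maps into a real Hilbert space with Moore–Penrose
pseudoinverses `Y†, Ŷ†` (characterized by `Y† Y = I` with `Y Y†` a self-adjoint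
projection, and likewise for `Ŷ`), and let `P_Y = Y Y†`, `P_Ŷ = Ŷ Ŷ†` be the
orthogonal projections onto the ranges. Then
`‖P_Y − P_Ŷ‖ ≤ min(‖Y†‖, ‖Ŷ†‖) · ‖Y − Ŷ‖`. -/
theorem projection_perturbation
    {H : Type*} [NormedAddCommGroup H] [InnerProductSpace ℝ H] [CompleteSpace H]
    {r : ℕ}
    (Y Yh : EuclideanSpace ℝ (Fin r) →L[ℝ] H)
    (hYinj : Function.Injective Y) (hYhinj : Function.Injective Yh)
    (Ydag Yhdag : H →L[ℝ] EuclideanSpace ℝ (Fin r))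
    (PY PYh : H →L[ℝ] H)
    (hYd1 : Ydag ∘L Y = ContinuousLinearMap.id ℝ _)
    (hYd2 : Y ∘L Ydag = PY)
    (hPYsa : ∀ x z : H, ⟪PY x, z⟫ = ⟪x, PY z⟫)
    (hYhd1 : Yhdag ∘L Yh = ContinuousLinearMap.id ℝ _)
    (hYhd2 : Yh ∘L Yhdag = PYh)
    (hPYhsa : ∀ x z : H, ⟪PYh x, z⟫ = ⟪x, PYh z⟫) :
    ‖PY - PYh‖ ≤ min ‖Ydag‖ ‖Yhdag‖ * ‖Y - Yh‖ := by
  rcases le_total ‖Ydag‖ ‖Yhdag‖ with h | h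
  · rw [min_eq_left h]
    have hk := key_onesided Yh Y hYhinj hYinj Yhdag Ydag PYh PY
      hYhd1 hYhd2 hPYhsa hYd1 hYd2 hPYsa
    rwa [norm_sub_rev PYh PY, norm_sub_rev Yh Y] at hk
  · rw [min_eq_right h]
    exact key_onesided Y Yh hYinj hYhinj Ydag Yhdag PY PYh
      hYd1 hYd2 hPYsa hYhd1 hYhd2 hPYhsa
end

section
/- Let S, T be self-adjoint positive semi-definite trace-class operators on a separable Hilbert space H with S ⪰ T (i.e., S − T is positive semi-definite). Then Tr((T^{1/2} S T^{1/2})^{1/2}) ≥ Tr(T). -/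
/-! Since `C² = R S R ⪰ R T R = T²`, we have `‖T x‖ ≤ ‖C x‖` for all `x`, and the trace inequality
follows termwise from operator monotonicity of the square root: if `A ⪰ 0`, `B` is symmetric and
`‖B x‖ ≤ ‖A x‖`, then `B ⪯ A`. To see this, replace `A` by the invertible `A + ε`. Then
`N = A⁻¹ B` is self-adjoint for the form `⟪x, A y⟫`, and `‖A Nⁿ x‖ ≤ ‖A x‖` keeps
`⟪x, A Nⁿ x⟫` bounded, while Cauchy–Schwarz for that form gives
`⟪x, A N^(2^n) x⟫² ≤ ⟪x, A x⟫ ⟪x, A N^(2^(n+1)) x⟫`; a bounded sequence with this doubling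
property cannot start above `⟪x, A x⟫`. -/

open scoped RealInnerProductSpace

theorem le_of_forall_sq_le_mul_succ {𝕜 : Type*} [Field 𝕜] [LinearOrder 𝕜] [IsStrictOrderedRing 𝕜]
    [Archimedean 𝕜] {q : ℕ → 𝕜} {a K : 𝕜} (ha : 0 ≤ a) (hq : ∀ n, q n ^ 2 ≤ a * q (n + 1))
    (hK : ∀ n, q n ≤ K) : q 0 ≤ a := by
  by_contra! hlt
  have ha : 0 < a := ha.lt_of_ne <| by
    rintro rfl
    nlinarith [hq 0]
  set r := q 0 / a
  have hr : 1 < r := (one_lt_div ha).2 hlt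
  have hgrowth : ∀ n, a * r ^ 2 ^ n ≤ q n := by
    intro n
    induction n with
    | zero => simp [r, mul_div_cancel₀ _ ha.ne']
    | succ n ih =>
      refine le_of_mul_le_mul_left ?_ ha
      calc a * (a * r ^ 2 ^ (n + 1)) = (a * r ^ 2 ^ n) ^ 2 := by ring
        _ ≤ q n ^ 2 := pow_le_pow_left₀ (by positivity) ih 2
        _ ≤ a * q (n + 1) := hq n
  obtain ⟨n, hn⟩ := pow_unbounded_of_one_lt (K / a) hr
  refine hn.not_ge ((le_div_iff₀' ha).2 ?_)
  calc a * r ^ n ≤ a * r ^ 2 ^ n := by gcongr; exacts [hr.le, Nat.lt_two_pow_self.le]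
    _ ≤ K := (hgrowth n).trans (hK n)

namespace LinearMap

theorem IsAdjointPair.pow {R M : Type*} [CommSemiring R] [AddCommMonoid M] [Module R M]
    {B : LinearMap.BilinForm R M} {f : Module.End R M} (hf : IsAdjointPair B B f f) (n : ℕ) :
    IsAdjointPair B B ⇑(f ^ n) ⇑(f ^ n) := by
  induction n with
  | zero => exact isAdjointPair_one
  | succ n ih =>
    intro x y
    rw [pow_succ', Module.End.mul_apply, hf, ih, ← Module.End.mul_apply, ← pow_succ, pow_succ']

namespace BilinForm

variable {𝕜 M : Type*} [Field 𝕜] [LinearOrder 𝕜] [IsStrictOrderedRing 𝕜] [Archimedean 𝕜]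
  [AddCommGroup M] [Module 𝕜 M]

theorem apply_map_le_apply_self_of_pow_bounded {β : LinearMap.BilinForm 𝕜 M} (hβ : ∀ x, 0 ≤ β x x)
    {N : Module.End 𝕜 M} (hN : IsAdjointPair β β N N) {x : M} {K : 𝕜}
    (hK : ∀ n, β x ((N ^ n) x) ≤ K) : β x (N x) ≤ β x x := by
  have hsquare (n : ℕ) : β x ((N ^ 2 ^ (n + 1)) x) = β ((N ^ 2 ^ n) x) ((N ^ 2 ^ n) x) := by
    rw [pow_succ, pow_mul, sq, Module.End.mul_apply, ← hN.pow]
  have hsymm (k : ℕ) : β ((N ^ k) x) x = β x ((N ^ k) x) := hN.pow k x x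
  have := le_of_forall_sq_le_mul_succ (q := fun n ↦ β x ((N ^ 2 ^ n) x)) (hβ x)
    (fun n ↦ by
      rw [hsquare, sq]
      nth_rw 2 [← hsymm]
      exact β.apply_mul_apply_le_of_forall_zero_le hβ _ _)
    (fun n ↦ hK _)
  rwa [pow_zero, pow_one] at this

end BilinForm

end LinearMap

namespace ContinuousLinearMap

variable {H : Type*} [NormedAddCommGroup H] [InnerProductSpace ℝ H] [CompleteSpace H]
  {A B : H →L[ℝ] H}

theorem inner_map_self_le_of_norm_map_le_of_coercive (hA : A.IsSymmetric) {c : ℝ} (hc : 0 < c)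
    (hAc : ∀ x, c * ‖x‖ ^ 2 ≤ ⟪x, A x⟫) (hB : B.IsSymmetric) (hBA : ∀ x, ‖B x‖ ≤ ‖A x‖)
    (x : H) : ⟪x, B x⟫ ≤ ⟪x, A x⟫ := by
  obtain ⟨u, hu⟩ : IsUnit A := isUnit_of_forall_le_norm_inner_map A (c := ⟨c, hc.le⟩) hc
    fun y ↦ by
      rw [real_inner_comm, Real.norm_eq_abs, mul_comm]
      exact (hAc y).trans (le_abs_self _)
  let β : LinearMap.BilinForm ℝ H := (innerₗ H).compl₂ (A : H →ₗ[ℝ] H)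
  let N : Module.End ℝ H := (↑u⁻¹ ∘L B : H →L[ℝ] H)
  have hAN (y : H) : A (N y) = B y := by
    rw [← hu]
    exact DFunLike.congr_fun u.mul_inv (B y)
  have hN : LinearMap.IsAdjointPair β β N N := fun p q ↦ by
    calc ⟪N p, A q⟫ = ⟪A (N p), q⟫ := (hA _ _).symm
      _ = ⟪p, B q⟫ := by rw [hAN]; exact hB p q
      _ = ⟪p, A (N q)⟫ := by rw [hAN]
  have hpow_bound (n : ℕ) : ‖A ((N ^ n) x)‖ ≤ ‖A x‖ := by
    induction n with
    | zero => simp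
    | succ n ih => rw [pow_succ', Module.End.mul_apply, hAN]; exact (hBA _).trans ih
  have := β.apply_map_le_apply_self_of_pow_bounded
    (fun y ↦ (by positivity : 0 ≤ c * ‖y‖ ^ 2).trans (hAc y)) hN (K := ‖x‖ * ‖A x‖)
    fun n ↦ (real_inner_le_norm _ _).trans (by gcongr; exact hpow_bound n)
  simpa [β, hAN] using this

theorem IsPositive.inner_map_self_le_of_norm_map_le (hA : A.IsPositive) (hB : B.IsSymmetric)
    (hBA : ∀ x, ‖B x‖ ≤ ‖A x‖) (x : H) : ⟪x, B x⟫ ≤ ⟪x, A x⟫ := by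
  have hshift {ε : ℝ} (hε : 0 < ε) : ⟪x, B x⟫ ≤ ⟪x, A x⟫ + ε * ‖x‖ ^ 2 := by
    set Aε := A + ε • (1 : H →L[ℝ] H)
    have hinner (y : H) : ⟪y, Aε y⟫ = ⟪y, A y⟫ + ε * ‖y‖ ^ 2 := by
      simp [Aε, inner_add_right, real_inner_smul_right]
    have hnorm (y : H) : ‖A y‖ ≤ ‖Aε y‖ := by
      refine (sq_le_sq₀ (norm_nonneg _) (norm_nonneg _)).1 ?_
      simp only [Aε, add_apply, smul_apply, one_apply_eq_self]
      rw [norm_add_sq_real, real_inner_smul_right, real_inner_comm]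
      nlinarith [hA.inner_nonneg_right y, sq_nonneg ‖ε • y‖]
    rw [← hinner]
    exact inner_map_self_le_of_norm_map_le_of_coercive
      (hA.add (isPositive_one.smul_of_nonneg hε.le)).isSymmetric hε
      (fun y ↦ by rw [hinner]; linarith [hA.inner_nonneg_right y]) hB
      (fun y ↦ (hBA y).trans (hnorm y)) x
  refine le_of_forall_pos_le_add fun δ hδ ↦
    (hshift (ε := δ / (‖x‖ ^ 2 + 1)) (by positivity)).trans ?_
  gcongr
  rw [div_mul_eq_mul_div, div_le_iff₀ (by positivity)]
  nlinarith

end ContinuousLinearMap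

theorem trace_sqrt_sandwich_ge_trace_general
    {H : Type*} [NormedAddCommGroup H] [InnerProductSpace ℝ H] [CompleteSpace H]
    (e : HilbertBasis ℕ ℝ H)
    (S T R C : H →L[ℝ] H)
    (hTsa : ∀ x y : H, ⟪T x, y⟫ = ⟪x, T y⟫)
    (hST : ∀ x : H, ⟪x, T x⟫ ≤ ⟪x, S x⟫)
    (hTtc : Summable fun i => ⟪e i, T (e i)⟫)
    (hRsa : ∀ x y : H, ⟪R x, y⟫ = ⟪x, R y⟫)
    (hR2 : R ∘L R = T)
    (hCsa : ∀ x y : H, ⟪C x, y⟫ = ⟪x, C y⟫)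
    (hCpos : ∀ x : H, 0 ≤ ⟪x, C x⟫)
    (hC2 : C ∘L C = R ∘L S ∘L R)
    (hCtc : Summable fun i => ⟪e i, C (e i)⟫) :
    ∑' i, ⟪e i, T (e i)⟫ ≤ ∑' i, ⟪e i, C (e i)⟫ := by
  have hC : C.IsPositive := (C.isPositive_iff).2 ⟨hCsa, fun x ↦ hCsa x x ▸ hCpos x⟩
  have hT (z : H) : T z = R (R z) := by rw [← hR2]; rfl
  have hCC (z : H) : C (C z) = R (S (R z)) := DFunLike.congr_fun hC2 z
  have hTC (z : H) : ‖T z‖ ≤ ‖C z‖ := by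
    refine (sq_le_sq₀ (norm_nonneg _) (norm_nonneg _)).1 ?_
    calc ‖T z‖ ^ 2 = ⟪R (R z), R (R z)⟫ := by rw [hT, real_inner_self_eq_norm_sq]
      _ = ⟪R z, T (R z)⟫ := by rw [hRsa, hT]
      _ ≤ ⟪R z, S (R z)⟫ := hST (R z)
      _ = ⟪z, C (C z)⟫ := by rw [hCC, hRsa]
      _ = ‖C z‖ ^ 2 := by rw [← hCsa, real_inner_self_eq_norm_sq]
  exact hTtc.tsum_le_tsum (fun i ↦ hC.inner_map_self_le_of_norm_map_le hTsa hTC (e i)) hCtc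

/-- Let `S, T` be self-adjoint positive semi-definite trace-class
operators on a separable real Hilbert space with `S ⪰ T`. Let `R = T^{1/2}` be the
principal square root of `T` and `C = (R S R)^{1/2}` the principal square root of
`T^{1/2} S T^{1/2}`. Then `Tr(C) ≥ Tr(T)`. -/
theorem trace_sqrt_sandwich_ge_trace
    {H : Type*} [NormedAddCommGroup H] [InnerProductSpace ℝ H] [CompleteSpace H]
    (e : HilbertBasis ℕ ℝ H)
    (S T R C : H →L[ℝ] H)
    (hSsa : ∀ x y : H, ⟪S x, y⟫ = ⟪x, S y⟫)
    (hTsa : ∀ x y : H, ⟪T x, y⟫ = ⟪x, T y⟫)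
    (hSpos : ∀ x : H, 0 ≤ ⟪x, S x⟫)
    (hTpos : ∀ x : H, 0 ≤ ⟪x, T x⟫)
    (hST : ∀ x : H, ⟪x, T x⟫ ≤ ⟪x, S x⟫)
    (hStc : Summable fun i => ⟪e i, S (e i)⟫)
    (hTtc : Summable fun i => ⟪e i, T (e i)⟫)
    (hRsa : ∀ x y : H, ⟪R x, y⟫ = ⟪x, R y⟫)
    (hRpos : ∀ x : H, 0 ≤ ⟪x, R x⟫)
    (hR2 : R ∘L R = T)
    (hCsa : ∀ x y : H, ⟪C x, y⟫ = ⟪x, C y⟫)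
    (hCpos : ∀ x : H, 0 ≤ ⟪x, C x⟫)
    (hC2 : C ∘L C = R ∘L S ∘L R)
    (hCtc : Summable fun i => ⟪e i, C (e i)⟫) :
    ∑' i, ⟪e i, T (e i)⟫ ≤ ∑' i, ⟪e i, C (e i)⟫ :=
  trace_sqrt_sandwich_ge_trace_general e S T R C hTsa hST hTtc hRsa hR2 hCsa hCpos hC2 hCtc
end

section
/- Let A : H₁ → H₂ be a Hilbert–Schmidt operator, W_n : ℝⁿ → H₁ a linear isometry, Ω ∈ ℝ^{n×r} any matrix, and Z_m : ℝᵐ → H₂ a linear isometry whose range contains range(A W_n). If Q ∈ ℝ^{m×r'} has orthonormal columns spanning range(Z_m* A W_n Ω), then the quasi-matrix Z_m Q has orthonormal columns and its range equals range(A W_n Ω). Consequently, ‖A − (Z_m Q)(Z_m Q)* A‖_HS ≤ ‖A − Z_m Q Q* Z_m* A W_n W_n*‖_HS. -/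
/-!
Since every sketch column `sⱼ = A W Ωⱼ` lies in `range Z`, the isometry `Z` maps the coordinate
vector `Z* sⱼ` back to `sⱼ`, so `Z` carries `span Q = span (Z* sⱼ)` onto the span of the sketch.
For the inequality, `y ↦ ∑ⱼ ⟪Z qⱼ, y⟫ Z qⱼ` is the best approximation of `y` from `span (Z qⱼ)`,
and the discretized approximant of `A eᵢ` lies in that span; summing over the Hilbert basis
compares the two Hilbert–Schmidt errors column by column.
-/

open scoped RealInnerProductSpace

section Orthonormal

variable {E ι : Type*} [NormedAddCommGroup E] [InnerProductSpace ℝ E] [Fintype ι] {v : ι → E}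

theorem Orthonormal.inner_sub_sum_inner_smul_sum_smul_eq_zero (hv : Orthonormal ℝ v) (x : E)
    (c : ι → ℝ) : ⟪x - ∑ j, ⟪v j, x⟫ • v j, ∑ j, c j • v j⟫ = 0 := by
  rw [inner_sum]
  refine Finset.sum_eq_zero fun j _ => ?_
  rw [real_inner_smul_right, real_inner_comm, inner_sub_right, hv.inner_right_fintype, sub_self,
    mul_zero]

theorem Orthonormal.norm_sub_sum_inner_smul_sq_le (hv : Orthonormal ℝ v) (x : E) (c : ι → ℝ) :
    ‖x - ∑ j, ⟪v j, x⟫ • v j‖ ^ 2 ≤ ‖x - ∑ j, c j • v j‖ ^ 2 := by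
  have hsplit : x - ∑ j, c j • v j
      = (x - ∑ j, ⟪v j, x⟫ • v j) + ∑ j, (⟪v j, x⟫ - c j) • v j := by
    simp only [sub_smul, Finset.sum_sub_distrib]
    abel
  rw [hsplit, norm_add_sq_real, hv.inner_sub_sum_inner_smul_sum_smul_eq_zero, mul_zero, add_zero]
  exact le_add_of_nonneg_right (sq_nonneg _)

theorem Orthonormal.norm_sum_inner_smul_le (hv : Orthonormal ℝ v) (x : E) :
    ‖∑ j, ⟪v j, x⟫ • v j‖ ≤ ‖x‖ := by
  have hpyth : ‖x‖ ^ 2 = ‖x - ∑ j, ⟪v j, x⟫ • v j‖ ^ 2 + ‖∑ j, ⟪v j, x⟫ • v j‖ ^ 2 := by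
    conv_lhs => rw [← sub_add_cancel x (∑ j, ⟪v j, x⟫ • v j)]
    rw [norm_add_sq_real, hv.inner_sub_sum_inner_smul_sum_smul_eq_zero, mul_zero, add_zero]
  exact le_of_sq_le_sq (by nlinarith [sq_nonneg ‖x - ∑ j, ⟪v j, x⟫ • v j‖]) (norm_nonneg x)

theorem Orthonormal.norm_sum_smul_sq (hv : Orthonormal ℝ v) (c : ι → ℝ) :
    ‖∑ j, c j • v j‖ ^ 2 = ∑ j, c j ^ 2 := by
  rw [← real_inner_self_eq_norm_sq, hv.inner_sum]
  simp only [conj_trivial, sq]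

theorem Orthonormal.summable_norm_sum_inner_smul_sq {κ : Type*} {e : κ → E}
    (he : Orthonormal ℝ e) (hv : Orthonormal ℝ v) :
    Summable fun i => ‖∑ j, ⟪v j, e i⟫ • v j‖ ^ 2 := by
  simp only [hv.norm_sum_smul_sq]
  refine summable_sum fun j _ => (he.inner_products_summable (v j)).congr fun i => ?_
  rw [Real.norm_eq_abs, sq_abs, real_inner_comm]

end Orthonormal

theorem summable_norm_sub_sq {ι E : Type*} [SeminormedAddCommGroup E] {f g : ι → E}
    (hf : Summable fun i => ‖f i‖ ^ 2) (hg : Summable fun i => ‖g i‖ ^ 2) :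
    Summable fun i => ‖f i - g i‖ ^ 2 :=
  ((hf.add hg).mul_left 2).of_nonneg_of_le (fun _ => sq_nonneg _) fun _ =>
    (pow_le_pow_left₀ (norm_nonneg _) (norm_sub_le _ _) 2).trans add_sq_le

theorem ContinuousLinearMap.summable_norm_sub_sum_inner_smul_sq {E F ι κ : Type*}
    [NormedAddCommGroup E] [InnerProductSpace ℝ E] [NormedAddCommGroup F] [InnerProductSpace ℝ F]
    [Fintype ι] (A : E →L[ℝ] F) {v : ι → F} (hv : Orthonormal ℝ v) {x g : κ → E}
    (hx : Summable fun i => ‖A (x i)‖ ^ 2) (hg : Summable fun i => ‖g i‖ ^ 2) :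
    Summable fun i => ‖A (x i) - ∑ j, ⟪v j, A (g i)⟫ • v j‖ ^ 2 := by
  refine summable_norm_sub_sq hx <| (hg.mul_left (‖A‖ ^ 2)).of_nonneg_of_le
    (fun _ => sq_nonneg _) fun i => ?_
  rw [← mul_pow]
  exact pow_le_pow_left₀ (norm_nonneg _) ((hv.norm_sum_inner_smul_le _).trans (A.le_opNorm _)) 2

section Sketch

variable {E ι κ σ : Type*} [NormedAddCommGroup E] [InnerProductSpace ℝ E] [Fintype ι]
  [DecidableEq ι]

theorem LinearIsometry.map_toLp_inner_single (Z : EuclideanSpace ℝ ι →ₗᵢ[ℝ] E) {s : E}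
    (hs : s ∈ LinearMap.range Z.toLinearMap) :
    Z (WithLp.toLp 2 fun k => ⟪Z (EuclideanSpace.single k 1), s⟫) = s := by
  obtain ⟨y, rfl⟩ := hs
  have hcoords : (WithLp.toLp 2 fun k => ⟪Z (EuclideanSpace.single k 1), Z y⟫ :
      EuclideanSpace ℝ ι) = y := by
    ext k
    simp [LinearIsometry.inner_map_map, EuclideanSpace.inner_single_left]
  rw [LinearIsometry.coe_toLinearMap, hcoords]

theorem LinearIsometry.span_range_apply_eq_of_span_eq_inner_single
    (Z : EuclideanSpace ℝ ι →ₗᵢ[ℝ] E) {Q : κ → EuclideanSpace ℝ ι} {s : σ → E}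
    (hs : ∀ j, s j ∈ LinearMap.range Z.toLinearMap)
    (hQ : Submodule.span ℝ (Set.range Q) = Submodule.span ℝ (Set.range fun j =>
      (WithLp.toLp 2 fun k => ⟪Z (EuclideanSpace.single k 1), s j⟫ : EuclideanSpace ℝ ι))) :
    Submodule.span ℝ (Set.range fun j => Z (Q j)) = Submodule.span ℝ (Set.range s) := by
  rw [← Function.comp_def, Set.range_comp, ← LinearIsometry.coe_toLinearMap,
    ← Submodule.map_span, hQ, Submodule.map_span, ← Set.range_comp]
  simp only [Function.comp_def, LinearIsometry.coe_toLinearMap, Z.map_toLp_inner_single (hs _)]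

end Sketch

theorem sketch_projection_error_le_discretized_general
    {H₁ H₂ : Type*}
    [NormedAddCommGroup H₁] [InnerProductSpace ℝ H₁]
    [NormedAddCommGroup H₂] [InnerProductSpace ℝ H₂]
    (A : H₁ →L[ℝ] H₂)
    (e : HilbertBasis ℕ ℝ H₁)
    (hHS : Summable fun i => ‖A (e i)‖ ^ 2)
    {m n r r' : ℕ}
    (W : EuclideanSpace ℝ (Fin n) →ₗᵢ[ℝ] H₁)
    (Z : EuclideanSpace ℝ (Fin m) →ₗᵢ[ℝ] H₂)
    (hrange : ∀ x : EuclideanSpace ℝ (Fin n), A (W x) ∈ Set.range Z)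
    (Ω : Matrix (Fin n) (Fin r) ℝ)
    (Q : Fin r' → EuclideanSpace ℝ (Fin m))
    (hQ : Orthonormal ℝ Q)
    (hQspan : Submodule.span ℝ (Set.range Q)
      = Submodule.span ℝ (Set.range fun j : Fin r =>
          (WithLp.toLp 2 (fun k : Fin m => ⟪Z (EuclideanSpace.single k 1),
              ∑ i : Fin n, Ω i j • A (W (EuclideanSpace.single i 1))⟫)
            : EuclideanSpace ℝ (Fin m)))) :
    Orthonormal ℝ (fun j : Fin r' => Z (Q j)) ∧
    Submodule.span ℝ (Set.range fun j : Fin r' => Z (Q j))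
      = Submodule.span ℝ (Set.range fun j : Fin r =>
          ∑ i : Fin n, Ω i j • A (W (EuclideanSpace.single i 1))) ∧
    (∑' i, ‖A (e i) - ∑ j : Fin r', ⟪Z (Q j), A (e i)⟫ • Z (Q j)‖ ^ 2
      ≤ ∑' i, ‖A (e i) - ∑ j : Fin r',
          ⟪Z (Q j), A (∑ l : Fin n, ⟪W (EuclideanSpace.single l 1), e i⟫
              • W (EuclideanSpace.single l 1))⟫ • Z (Q j)‖ ^ 2) := by
  have hZQ : Orthonormal ℝ (fun j => Z (Q j)) := hQ.comp_linearIsometry Z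
  have hWcols : Orthonormal ℝ (fun l : Fin n => W (EuclideanSpace.single l 1)) :=
    EuclideanSpace.orthonormal_single.comp_linearIsometry W
  refine ⟨hZQ, Z.span_range_apply_eq_of_span_eq_inner_single (fun j => ?_) hQspan, ?_⟩
  · exact Submodule.sum_mem _ fun i _ => Submodule.smul_mem _ _ (hrange _)
  have hproj_summable : Summable fun i => ‖A (e i) - ∑ j, ⟪Z (Q j), A (e i)⟫ • Z (Q j)‖ ^ 2 :=
    hHS.of_nonneg_of_le (fun _ => sq_nonneg _) fun i => by
      simpa using hZQ.norm_sub_sum_inner_smul_sq_le (A (e i)) 0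
  exact hproj_summable.tsum_le_tsum (fun i => hZQ.norm_sub_sum_inner_smul_sq_le _ _)
    (A.summable_norm_sub_sum_inner_smul_sq hZQ hHS
      (e.orthonormal.summable_norm_sum_inner_smul_sq hWcols))

/-- Let `A : H₁ → H₂` be Hilbert–Schmidt, `W : ℝⁿ → H₁` a linear
isometry, `Ω ∈ ℝ^{n×r}`, and `Z : ℝᵐ → H₂` a linear isometry whose range contains
`range(A W)`. If `Q ∈ ℝ^{m×r'}` has orthonormal columns spanning
`range(Z* A W Ω)`, then `Z Q` has orthonormal columns with
`range(Z Q) = range(A W Ω)` (span of the sketch columns `sⱼ = A W Ωⱼ`), and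
consequently `‖A − (Z Q)(Z Q)* A‖²_HS ≤ ‖A − Z Q Q* Z* A W W*‖²_HS`. -/
theorem sketch_projection_error_le_discretized
    {H₁ H₂ : Type*}
    [NormedAddCommGroup H₁] [InnerProductSpace ℝ H₁] [CompleteSpace H₁]
    [NormedAddCommGroup H₂] [InnerProductSpace ℝ H₂] [CompleteSpace H₂]
    (A : H₁ →L[ℝ] H₂)
    (e : HilbertBasis ℕ ℝ H₁)
    (hHS : Summable fun i => ‖A (e i)‖ ^ 2)
    {m n r r' : ℕ}
    (W : EuclideanSpace ℝ (Fin n) →ₗᵢ[ℝ] H₁)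
    (Z : EuclideanSpace ℝ (Fin m) →ₗᵢ[ℝ] H₂)
    (hrange : ∀ x : EuclideanSpace ℝ (Fin n), A (W x) ∈ Set.range Z)
    (Ω : Matrix (Fin n) (Fin r) ℝ)
    (Q : Fin r' → EuclideanSpace ℝ (Fin m))
    (hQ : Orthonormal ℝ Q)
    (hQspan : Submodule.span ℝ (Set.range Q)
      = Submodule.span ℝ (Set.range fun j : Fin r =>
          (WithLp.toLp 2 (fun k : Fin m => ⟪Z (EuclideanSpace.single k 1),
              ∑ i : Fin n, Ω i j • A (W (EuclideanSpace.single i 1))⟫)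
            : EuclideanSpace ℝ (Fin m)))) :
    Orthonormal ℝ (fun j : Fin r' => Z (Q j)) ∧
    Submodule.span ℝ (Set.range fun j : Fin r' => Z (Q j))
      = Submodule.span ℝ (Set.range fun j : Fin r =>
          ∑ i : Fin n, Ω i j • A (W (EuclideanSpace.single i 1))) ∧
    (∑' i, ‖A (e i) - ∑ j : Fin r', ⟪Z (Q j), A (e i)⟫ • Z (Q j)‖ ^ 2
      ≤ ∑' i, ‖A (e i) - ∑ j : Fin r',
          ⟪Z (Q j), A (∑ l : Fin n, ⟪W (EuclideanSpace.single l 1), e i⟫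
              • W (EuclideanSpace.single l 1))⟫ • Z (Q j)‖ ^ 2) :=
  sketch_projection_error_le_discretized_general A e hHS W Z hrange Ω Q hQ hQspan
end

section
/- Let T : H → H be a self-adjoint positive semi-definite trace-class operator on a separable Hilbert space, W_n : ℝⁿ → H a linear isometry, and Ω ∈ ℝ^{n×r} a matrix. Then the Nyström approximation T̂_n := (T W_n Ω) (Ω* W_n* T W_n Ω)† (T W_n Ω)* equals T^{1/2} P T^{1/2}, where P is the orthogonal projection onto range(T^{1/2} W_n Ω) and † denotes the Moore–Penrose pseudoinverse of the r×r matrix Ω* W_n* T W_n Ω. -/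
open scoped RealInnerProductSpace

lemma nystrom_aux {H : Type*} [NormedAddCommGroup H] [InnerProductSpace ℝ H]
    {r : ℕ} (v : Fin r → H) (M Mdag : Matrix (Fin r) (Fin r) ℝ)
    (hMv : ∀ a b, M a b = ⟪v a, v b⟫)
    (hMP1 : M * Mdag * M = M)
    (P : H → H)
    (hPsa : ∀ x z : H, ⟪P x, z⟫ = ⟪x, P z⟫)
    (hPmem : ∀ x, P x ∈ Submodule.span ℝ (Set.range v))
    (hPfix : ∀ z ∈ Submodule.span ℝ (Set.range v), P z = z)
    (z : H) :
    (∑ a, (∑ b, Mdag a b * ⟪v b, z⟫) • v a) = P z := by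
  set N : Matrix (Fin r) (Fin r) ℝ := 1 - M * Mdag with hNdef
  have hN : N * M = 0 := by
    rw [hNdef, Matrix.sub_mul, Matrix.one_mul, hMP1, sub_self]
  have key : ∀ c, ∑ b, (M * Mdag) c b * ⟪v b, z⟫ = ⟪v c, z⟫ := by
    intro c
    have hu : (∑ b, N c b • v b) = 0 := by
      have h2 : ⟪(∑ b, N c b • v b), (∑ b, N c b • v b)⟫ = 0 := by
        rw [sum_inner]
        have h3 : ∀ b, ⟪v b, ∑ b', N c b' • v b'⟫ = ∑ b', N c b' * M b b' := by
          intro b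
          rw [inner_sum]
          refine Finset.sum_congr rfl fun b' _ => ?_
          rw [real_inner_smul_right, hMv]
        calc ∑ b, ⟪N c b • v b, ∑ b', N c b' • v b'⟫
            = ∑ b, N c b * ∑ b', N c b' * M b b' := by
              refine Finset.sum_congr rfl fun b _ => ?_
              rw [real_inner_smul_left, h3]
          _ = ∑ b', N c b' * ∑ b, N c b * M b b' := by
              simp_rw [Finset.mul_sum]
              rw [Finset.sum_comm]
              refine Finset.sum_congr rfl fun b' _ => Finset.sum_congr rfl fun b _ => by ring
          _ = 0 := by
              refine Finset.sum_eq_zero fun b' _ => ?_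
              have : ∑ b, N c b * M b b' = (N * M) c b' := rfl
              rw [this, hN]
              simp
      exact inner_self_eq_zero.mp h2
    have h4 : ∑ b, N c b * ⟪v b, z⟫ = 0 := by
      have := congrArg (fun u => ⟪u, z⟫) hu
      simpa [sum_inner, real_inner_smul_left] using this
    have h5 : ∑ b, N c b * ⟪v b, z⟫
        = ⟪v c, z⟫ - ∑ b, (M * Mdag) c b * ⟪v b, z⟫ := by
      simp [hNdef, Matrix.sub_apply, Matrix.one_apply, sub_mul, Finset.sum_sub_distrib,
        ite_mul, Finset.sum_ite_eq]
    linarith [h4, h5.symm]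
  -- Q := LHS
  have hQc : ∀ c, ⟪v c, ∑ a, (∑ b, Mdag a b * ⟪v b, z⟫) • v a⟫ = ⟪v c, z⟫ := by
    intro c
    rw [inner_sum]
    calc ∑ a, ⟪v c, (∑ b, Mdag a b * ⟪v b, z⟫) • v a⟫
        = ∑ a, ∑ b, M c a * (Mdag a b * ⟪v b, z⟫) := by
          refine Finset.sum_congr rfl fun a _ => ?_
          rw [real_inner_smul_right, ← hMv, Finset.sum_mul]
          exact Finset.sum_congr rfl fun b _ => by ring
      _ = ∑ b, (M * Mdag) c b * ⟪v b, z⟫ := by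
          rw [Finset.sum_comm]
          refine Finset.sum_congr rfl fun b _ => ?_
          rw [Matrix.mul_apply, Finset.sum_mul]
          exact Finset.sum_congr rfl fun a _ => by ring
      _ = ⟪v c, z⟫ := key c
  have hPc : ∀ c, ⟪v c, P z⟫ = ⟪v c, z⟫ := by
    intro c
    rw [← hPsa, hPfix (v c) (Submodule.subset_span (Set.mem_range_self c))]
  set d : H := P z - (∑ a, (∑ b, Mdag a b * ⟪v b, z⟫) • v a) with hd
  have hdmem : d ∈ Submodule.span ℝ (Set.range v) := by
    refine Submodule.sub_mem _ (hPmem z) ?_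
    exact Submodule.sum_mem _ fun a _ =>
      Submodule.smul_mem _ _ (Submodule.subset_span (Set.mem_range_self a))
  have hvd : ∀ c, ⟪v c, d⟫ = 0 := by
    intro c
    rw [hd, inner_sub_right, hPc, hQc, sub_self]
  have hud : ∀ u ∈ Submodule.span ℝ (Set.range v), ⟪u, d⟫ = 0 := by
    intro u hu
    induction hu using Submodule.span_induction with
    | mem u hu => obtain ⟨c, rfl⟩ := hu; exact hvd c
    | zero => simp
    | add u w _ _ h1 h2 => rw [inner_add_left, h1, h2, add_zero]
    | smul c u _ h1 => rw [real_inner_smul_left, h1, mul_zero]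
  have : d = 0 := inner_self_eq_zero.mp (hud d hdmem)
  exact (sub_eq_zero.mp this).symm

/-- Let `T` be an SPSD trace-class operator on a separable real
Hilbert space with principal square root `R = T^{1/2}`, `W : ℝⁿ → H` a linear
isometry, and `Ω ∈ ℝ^{n×r}`. Let `M = Ω* W* T W Ω ∈ ℝ^{r×r}` with Moore–Penrose
pseudoinverse `M†`, and let `P` be the orthogonal projection onto
`range(T^{1/2} W Ω)`. Then the Nyström approximation satisfies
`(T W Ω) M† (T W Ω)* = T^{1/2} P T^{1/2}` pointwise. -/
theorem nystrom_eq_sqrt_projection_sqrt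
    {H : Type*} [NormedAddCommGroup H] [InnerProductSpace ℝ H] [CompleteSpace H]
    (T R : H →L[ℝ] H)
    (hTsa : ∀ x y : H, ⟪T x, y⟫ = ⟪x, T y⟫)
    (hTpos : ∀ x : H, 0 ≤ ⟪x, T x⟫)
    (hRsa : ∀ x y : H, ⟪R x, y⟫ = ⟪x, R y⟫)
    (hRpos : ∀ x : H, 0 ≤ ⟪x, R x⟫)
    (hR2 : R ∘L R = T)
    {n r : ℕ}
    (W : EuclideanSpace ℝ (Fin n) →ₗᵢ[ℝ] H)
    (Ω : Matrix (Fin n) (Fin r) ℝ)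
    (M Mdag : Matrix (Fin r) (Fin r) ℝ)
    (hM : M = Matrix.of fun a b : Fin r =>
      ⟪∑ i : Fin n, Ω i a • W (EuclideanSpace.single i 1),
        T (∑ i : Fin n, Ω i b • W (EuclideanSpace.single i 1))⟫)
    (hMP1 : M * Mdag * M = M)
    (hMP2 : Mdag * M * Mdag = Mdag)
    (hMP3 : (M * Mdag).transpose = M * Mdag)
    (hMP4 : (Mdag * M).transpose = Mdag * M)
    (P : H →L[ℝ] H)
    (hPidem : P ∘L P = P)
    (hPsa : ∀ x z : H, ⟪P x, z⟫ = ⟪x, P z⟫)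
    (hPmem : ∀ x : H, P x ∈ Submodule.span ℝ (Set.range fun j : Fin r =>
        R (∑ i : Fin n, Ω i j • W (EuclideanSpace.single i 1))))
    (hPfix : ∀ z ∈ Submodule.span ℝ (Set.range fun j : Fin r =>
        R (∑ i : Fin n, Ω i j • W (EuclideanSpace.single i 1))), P z = z) :
    ∀ x : H,
      (∑ a : Fin r, (∑ b : Fin r, Mdag a b
          * ⟪T (∑ i : Fin n, Ω i b • W (EuclideanSpace.single i 1)), x⟫)
        • T (∑ i : Fin n, Ω i a • W (EuclideanSpace.single i 1)))
      = R (P (R x)) := by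
  intro x
  have hT : ∀ u : H, T u = R (R u) := fun u => by rw [← hR2]; rfl
  set v : Fin r → H := fun j => R (∑ i : Fin n, Ω i j • W (EuclideanSpace.single i 1)) with hv
  have hMv : ∀ a b, M a b = ⟪v a, v b⟫ := by
    intro a b
    have h := hRsa (∑ i : Fin n, Ω i a • W (EuclideanSpace.single i 1))
      (R (∑ i : Fin n, Ω i b • W (EuclideanSpace.single i 1)))
    rw [hM]
    show ⟪_, T _⟫ = _
    rw [hT]
    exact h.symm
  have main := nystrom_aux v M Mdag hMv hMP1 P hPsa hPmem hPfix (R x)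
  rw [← main, map_sum]
  refine Finset.sum_congr rfl fun a _ => ?_
  rw [map_smul]
  congr 1
  · refine Finset.sum_congr rfl fun b _ => ?_
    congr 1
    rw [hT, hRsa]
  · exact hT _
end

section
/- Let A : H₁ → H₂ be a Hilbert–Schmidt operator between separable Hilbert spaces with singular values σ₁ ≥ σ₂ ≥ ⋯, let r ≥ 1, and suppose σ_{r+2} > 0. Let Y : ℝʳ → H₂ be the quasi-matrix with columns y_j = ∑ᵢ ω_{ij} σᵢ uᵢ for real coefficients ω_{ij} (with each column in H₂), where {uᵢ} are the left singular vectors of A. Let Ω_{r+2} = [ω_{ij}]_{i≤r+2, j≤r} have full column rank r. Then Y has rank r and its pseudoinverse satisfies ‖Y†‖_op ≤ ‖Ω_{r+2}†‖_op / σ_{r+2}. -/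
open scoped RealInnerProductSpace

/-- Let `A : H₁ → H₂` be Hilbert–Schmidt with singular values
`σ₀ ≥ σ₁ ≥ ⋯` and left singular vectors `uᵢ`, `r ≥ 1`, and `σ_{r+2} > 0`
(0-based: `σ (r+1) > 0`). Let `Y : ℝʳ → H₂` have columns `y_j = ∑ᵢ ω_{ij} σᵢ uᵢ`,
and let `Ω_{r+2} = [ω_{ij}]_{i<r+2, j<r}` have full column rank, with Moore–Penrose
pseudoinverse `Ω†` (`Ω† Ω = I`, `Ω Ω†` symmetric). Then `Y` has rank `r`
(is injective) and its Moore–Penrose pseudoinverse `Y†` (`Y† Y = Id`, `Y Y†`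
self-adjoint) satisfies `‖Y†‖ ≤ ‖Ω†‖ / σ_{r+2}`. -/
theorem pseudoinverse_norm_bound
    {H₁ H₂ : Type*}
    [NormedAddCommGroup H₁] [InnerProductSpace ℝ H₁] [CompleteSpace H₁]
    [NormedAddCommGroup H₂] [InnerProductSpace ℝ H₂] [CompleteSpace H₂]
    (A : H₁ →L[ℝ] H₂)
    (σ : ℕ → ℝ) (u : ℕ → H₂) (v : ℕ → H₁)
    (hu : Orthonormal ℝ u) (hv : Orthonormal ℝ v)
    (hσ : ∀ i, 0 ≤ σ i) (hσmono : Antitone σ)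
    (hSVD : ∀ x : H₁, HasSum (fun i => (σ i * ⟪v i, x⟫) • u i) (A x))
    {r : ℕ} (hr : 1 ≤ r)
    (hpos : 0 < σ (r + 1))
    (ω : ℕ → Fin r → ℝ)
    (Y : EuclideanSpace ℝ (Fin r) →L[ℝ] H₂)
    (hY : ∀ j : Fin r, HasSum (fun i => (ω i j * σ i) • u i)
      (Y (EuclideanSpace.single j 1)))
    (Ωdag : Matrix (Fin r) (Fin (r + 2)) ℝ)
    (hΩ1 : Ωdag * (Matrix.of fun (i : Fin (r + 2)) (j : Fin r) => ω i j) = 1)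
    (hΩ2 : ((Matrix.of fun (i : Fin (r + 2)) (j : Fin r) => ω i j) * Ωdag).transpose
      = (Matrix.of fun (i : Fin (r + 2)) (j : Fin r) => ω i j) * Ωdag)
    (Ydag : H₂ →L[ℝ] EuclideanSpace ℝ (Fin r))
    (hYd1 : Ydag ∘L Y = ContinuousLinearMap.id ℝ _)
    (hYd2 : ∀ x z : H₂, ⟪Y (Ydag x), z⟫ = ⟪x, Y (Ydag z)⟫) :
    Function.Injective Y ∧
    ‖Ydag‖ ≤ ‖LinearMap.toContinuousLinearMap (Matrix.toEuclideanLin Ωdag)‖ / σ (r + 1) := by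
  set Ω : Matrix (Fin (r + 2)) (Fin r) ℝ := Matrix.of fun i j => ω i j with hΩdef
  set Ωd := LinearMap.toContinuousLinearMap (Matrix.toEuclideanLin Ωdag) with hΩd
  constructor
  · intro a b hab
    have h : (Ydag ∘L Y) a = (Ydag ∘L Y) b := by
      simp only [ContinuousLinearMap.comp_apply, hab]
    simpa [hYd1] using h
  -- inner products with columns
  have hcol : ∀ (i : ℕ) (j : Fin r), ⟪u i, Y (EuclideanSpace.single j 1)⟫ = ω i j * σ i := by
    intro i j
    have h1 := (hY j).mapL (innerSL ℝ (u i))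
    simp only [innerSL_apply_apply, real_inner_smul_right] at h1
    have h2 : (fun k => (ω k j * σ k) * ⟪u i, u k⟫)
        = fun k => if k = i then ω i j * σ i else 0 := by
      funext k
      rw [orthonormal_iff_ite.mp hu]
      by_cases h : i = k
      · subst h; simp
      · simp [h, Ne.symm h]
    rw [h2] at h1
    exact h1.unique (hasSum_ite_eq i _)
  -- decomposition of vectors
  have hdec : ∀ c : EuclideanSpace ℝ (Fin r),
      c = ∑ j : Fin r, c j • EuclideanSpace.single j 1 := by
    intro c
    have h := (EuclideanSpace.basisFun (Fin r) ℝ).sum_repr c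
    simp only [EuclideanSpace.basisFun_repr, EuclideanSpace.basisFun_apply] at h
    exact h.symm
  have hinner : ∀ (c : EuclideanSpace ℝ (Fin r)) (i : ℕ),
      ⟪u i, Y c⟫ = σ i * ∑ j : Fin r, ω i j * c j := by
    intro c i
    conv_lhs => rw [hdec c]
    rw [map_sum, inner_sum]
    simp only [map_smul, real_inner_smul_right, hcol]
    rw [Finset.mul_sum]
    exact Finset.sum_congr rfl fun j _ => by ring
  -- key estimate
  have key : ∀ c : EuclideanSpace ℝ (Fin r), σ (r + 1) * ‖c‖ ≤ ‖Ωd‖ * ‖Y c‖ := by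
    intro c
    set w : EuclideanSpace ℝ (Fin (r + 2)) :=
      (WithLp.equiv 2 (Fin (r + 2) → ℝ)).symm (Matrix.mulVec Ω ((WithLp.equiv 2 (Fin r → ℝ)) c)) with hw
    have hwi : ∀ i : Fin (r + 2), w i = ∑ j : Fin r, ω i j * c j := by
      intro i
      simp [hw, Matrix.mulVec, dotProduct, hΩdef]
    have hwc : Ωd w = c := by
      rw [hΩd]
      simp only [LinearMap.coe_toContinuousLinearMap', hw,
        Matrix.toEuclideanLin_apply]
      simp [Matrix.mulVec_mulVec, hΩ1, Matrix.one_mulVec]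
    have hc_le : ‖c‖ ≤ ‖Ωd‖ * ‖w‖ := by
      rw [← hwc]; exact Ωd.le_opNorm w
    have hw_le : σ (r + 1) * ‖w‖ ≤ ‖Y c‖ := by
      have hsum : ∑ i : Fin (r + 2), (σ (r + 1) * w i) ^ 2 ≤ ‖Y c‖ ^ 2 := by
        have bessel := hu.sum_inner_products_le (s := Finset.range (r + 2)) (Y c)
        calc ∑ i : Fin (r + 2), (σ (r + 1) * w i) ^ 2
            ≤ ∑ i : Fin (r + 2), (σ (i : ℕ) * w i) ^ 2 := by
              refine Finset.sum_le_sum fun i _ => ?_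
              rw [mul_pow, mul_pow]
              have hle : σ (r + 1) ≤ σ (i : ℕ) := hσmono (Nat.lt_succ_iff.mp i.2)
              have : σ (r + 1) ^ 2 ≤ σ (i : ℕ) ^ 2 :=
                pow_le_pow_left₀ hpos.le hle 2
              exact mul_le_mul_of_nonneg_right this (sq_nonneg _)
          _ = ∑ i ∈ Finset.range (r + 2), ‖⟪u i, Y c⟫‖ ^ 2 := by
              rw [Finset.sum_range fun i => ‖⟪u i, Y c⟫‖ ^ 2]
              refine Finset.sum_congr rfl fun i _ => ?_
              rw [hinner c i, Real.norm_eq_abs, sq_abs, hwi i]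
          _ ≤ ‖Y c‖ ^ 2 := bessel
      have hnw : (σ (r + 1) * ‖w‖) ^ 2 ≤ ‖Y c‖ ^ 2 := by
        have hwnorm : ‖w‖ ^ 2 = ∑ i : Fin (r + 2), (w i) ^ 2 := by
          rw [EuclideanSpace.norm_eq, Real.sq_sqrt (Finset.sum_nonneg fun i _ => sq_nonneg _)]
          exact Finset.sum_congr rfl fun i _ => by rw [Real.norm_eq_abs, sq_abs]
        rw [mul_pow, hwnorm, Finset.mul_sum]
        simpa [mul_pow] using hsum
      have h1 : 0 ≤ σ (r + 1) * ‖w‖ := mul_nonneg hpos.le (norm_nonneg _)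
      calc σ (r + 1) * ‖w‖ = Real.sqrt ((σ (r + 1) * ‖w‖) ^ 2) := (Real.sqrt_sq h1).symm
        _ ≤ Real.sqrt (‖Y c‖ ^ 2) := Real.sqrt_le_sqrt hnw
        _ = ‖Y c‖ := Real.sqrt_sq (norm_nonneg _)
    calc σ (r + 1) * ‖c‖ ≤ σ (r + 1) * (‖Ωd‖ * ‖w‖) :=
          mul_le_mul_of_nonneg_left hc_le hpos.le
      _ = ‖Ωd‖ * (σ (r + 1) * ‖w‖) := by ring
      _ ≤ ‖Ωd‖ * ‖Y c‖ := mul_le_mul_of_nonneg_left hw_le (norm_nonneg _)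
  -- projection bound
  have hproj : ∀ x : H₂, ‖Y (Ydag x)‖ ≤ ‖x‖ := by
    intro x
    set p := Y (Ydag x) with hp
    have hfix : Ydag p = Ydag x := by
      have h := congrArg
        (fun T : EuclideanSpace ℝ (Fin r) →L[ℝ] EuclideanSpace ℝ (Fin r) => T (Ydag x)) hYd1
      simpa using h
    have h1 : ⟪p, p⟫ = ⟪x, p⟫ := by
      have h := hYd2 x p
      rw [hfix] at h
      exact h
    rcases eq_or_lt_of_le (norm_nonneg p) with h0 | h0
    · rw [← h0]; exact norm_nonneg x
    · have h2 : ‖p‖ * ‖p‖ ≤ ‖x‖ * ‖p‖ := by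
        rw [← real_inner_self_eq_norm_mul_norm, h1]
        exact real_inner_le_norm x p
      exact le_of_mul_le_mul_right h2 h0
  refine ContinuousLinearMap.opNorm_le_bound Ydag
    (div_nonneg (norm_nonneg _) hpos.le) fun x => ?_
  rw [div_mul_eq_mul_div, le_div_iff₀ hpos, mul_comm]
  calc σ (r + 1) * ‖Ydag x‖ ≤ ‖Ωd‖ * ‖Y (Ydag x)‖ := key (Ydag x)
    _ ≤ ‖Ωd‖ * ‖x‖ := mul_le_mul_of_nonneg_left (hproj x) (norm_nonneg _)
end
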